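/- arXiv:2303.12200 — 8 statements merged into one kernel-verified Lean document; each statement's English description precedes it below -/
import Mathlib

section
/- Let n ≥ 2 and define f : ℝⁿ → ℝ by f(x) = exp(π·x₁/2)·sin(π·xₙ/2). Then f is harmonic on all of ℝⁿ, f(x) ≥ 0 for every x with 0 ≤ xₙ ≤ 2, f(x) = 0 for every x with xₙ = 0 or xₙ = 2, f is not identically zero on the slab {x : 0 ≤ xₙ ≤ 2}, and sup{‖∇f(x)‖ : x ∈ ℝⁿ, xₙ = 0} = ∞. -/
open MeasureTheory Set Real

/-! Write `f(x) = g(x₁) h(xₙ)` with `g(t) = e^{ct}`, `h(t) = sin(ct)` and `c = π/2`. Since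
`g'' = c² g` and `h'' = -c² h`, the two nonzero second partials of `f` cancel. On `{xₙ = 0}` the
normal derivative is `∂ₙf = c e^{c x₁}`, which is unbounded as `x₁ → ∞`. -/

noncomputable def laplacian {n : ℕ} (f : EuclideanSpace ℝ (Fin n) → ℝ)
    (x : EuclideanSpace ℝ (Fin n)) : ℝ :=
  ∑ i : Fin n,
    fderiv ℝ (fun y => fderiv ℝ f y (EuclideanSpace.single i 1)) x (EuclideanSpace.single i 1)

theorem abs_fderiv_apply_le_norm_gradient {F : Type*} [NormedAddCommGroup F]
    [InnerProductSpace ℝ F] [CompleteSpace F] (f : F → ℝ) (x v : F) :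
    |fderiv ℝ f x v| ≤ ‖gradient f x‖ * ‖v‖ := by
  rw [← toDual_gradient, InnerProductSpace.toDual_apply_apply]
  exact abs_real_inner_le_norm _ _

section CoordinateProduct

variable {n : ℕ} {g g' g'' h h' h'' : ℝ → ℝ} {i k : Fin n}

theorem hasFDerivAt_mul_comp_coord (hg : ∀ t, HasDerivAt g (g' t) t)
    (hh : ∀ t, HasDerivAt h (h' t) t) (x : EuclideanSpace ℝ (Fin n)) :
    HasFDerivAt (fun y : EuclideanSpace ℝ (Fin n) => g (y i) * h (y k))
      (g (x i) • h' (x k) • EuclideanSpace.proj (𝕜 := ℝ) k +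
        h (x k) • g' (x i) • EuclideanSpace.proj (𝕜 := ℝ) i) x :=
  ((hg (x i)).comp_hasFDerivAt x (EuclideanSpace.proj (𝕜 := ℝ) i).hasFDerivAt).mul
    ((hh (x k)).comp_hasFDerivAt x (EuclideanSpace.proj (𝕜 := ℝ) k).hasFDerivAt)

theorem fderiv_mul_comp_coord_apply_single (hg : ∀ t, HasDerivAt g (g' t) t)
    (hh : ∀ t, HasDerivAt h (h' t) t) (x : EuclideanSpace ℝ (Fin n)) (j : Fin n) :
    fderiv ℝ (fun y : EuclideanSpace ℝ (Fin n) => g (y i) * h (y k)) x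
        (EuclideanSpace.single j 1) =
      (if i = j then g' (x i) * h (x k) else 0) + (if k = j then g (x i) * h' (x k) else 0) := by
  rw [(hasFDerivAt_mul_comp_coord hg hh x).fderiv]
  simp only [add_apply, smul_apply, PiLp.proj_apply, PiLp.single_apply, smul_eq_mul]
  split_ifs <;> ring

theorem fderiv_mul_comp_coord_single_left (hg : ∀ t, HasDerivAt g (g' t) t)
    (hh : ∀ t, HasDerivAt h (h' t) t) (hik : i ≠ k) :
    (fun y : EuclideanSpace ℝ (Fin n) =>
        fderiv ℝ (fun y => g (y i) * h (y k)) y (EuclideanSpace.single i 1)) =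
      fun y => g' (y i) * h (y k) := by
  funext y
  simp [fderiv_mul_comp_coord_apply_single hg hh, hik.symm]

theorem fderiv_mul_comp_coord_single_right (hg : ∀ t, HasDerivAt g (g' t) t)
    (hh : ∀ t, HasDerivAt h (h' t) t) (hik : i ≠ k) :
    (fun y : EuclideanSpace ℝ (Fin n) =>
        fderiv ℝ (fun y => g (y i) * h (y k)) y (EuclideanSpace.single k 1)) =
      fun y => g (y i) * h' (y k) := by
  funext y
  simp [fderiv_mul_comp_coord_apply_single hg hh, hik]

theorem fderiv_mul_comp_coord_single_of_ne (hg : ∀ t, HasDerivAt g (g' t) t)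
    (hh : ∀ t, HasDerivAt h (h' t) t) {j : Fin n} (hij : i ≠ j) (hkj : k ≠ j) :
    (fun y : EuclideanSpace ℝ (Fin n) =>
        fderiv ℝ (fun y => g (y i) * h (y k)) y (EuclideanSpace.single j 1)) = 0 := by
  funext y
  simp [fderiv_mul_comp_coord_apply_single hg hh, hij, hkj]

theorem laplacian_mul_comp_coord (hg : ∀ t, HasDerivAt g (g' t) t)
    (hg' : ∀ t, HasDerivAt g' (g'' t) t) (hh : ∀ t, HasDerivAt h (h' t) t)
    (hh' : ∀ t, HasDerivAt h' (h'' t) t) (hik : i ≠ k) (x : EuclideanSpace ℝ (Fin n)) :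
    laplacian (fun y => g (y i) * h (y k)) x = g'' (x i) * h (x k) + g (x i) * h'' (x k) := by
  rw [laplacian, Fintype.sum_eq_add i k hik, fderiv_mul_comp_coord_single_left hg hh hik,
    fderiv_mul_comp_coord_single_right hg hh hik,
    fderiv_mul_comp_coord_apply_single hg' hh, fderiv_mul_comp_coord_apply_single hg hh']
  · simp [hik, hik.symm]
  · rintro j ⟨hji, hjk⟩
    rw [fderiv_mul_comp_coord_single_of_ne hg hh (Ne.symm hji) (Ne.symm hjk)]
    simp

end CoordinateProduct

theorem hasDerivAt_exp_const_mul (c t : ℝ) :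
    HasDerivAt (fun s => exp (c * s)) (c * exp (c * t)) t := by
  simpa [mul_comm] using ((hasDerivAt_id t).const_mul c).exp

theorem hasDerivAt_sin_const_mul (c t : ℝ) :
    HasDerivAt (fun s => sin (c * s)) (c * cos (c * t)) t := by
  simpa [mul_comm] using ((hasDerivAt_id t).const_mul c).sin

theorem hasDerivAt_cos_const_mul (c t : ℝ) :
    HasDerivAt (fun s => cos (c * s)) (-(c * sin (c * t))) t := by
  simpa [mul_comm] using ((hasDerivAt_id t).const_mul c).cos

theorem laplacian_exp_mul_sin {n : ℕ} {i k : Fin n} (hik : i ≠ k) (c : ℝ)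
    (x : EuclideanSpace ℝ (Fin n)) :
    laplacian (fun y => exp (c * y i) * sin (c * y k)) x = 0 := by
  rw [laplacian_mul_comp_coord (hasDerivAt_exp_const_mul c)
    (fun t => (hasDerivAt_exp_const_mul c t).const_mul c) (hasDerivAt_sin_const_mul c)
    (fun t => (hasDerivAt_cos_const_mul c t).const_mul c) hik x]
  ring

theorem abs_mul_exp_mul_cos_le_norm_gradient {n : ℕ} {i k : Fin n} (hik : i ≠ k) (c : ℝ)
    (x : EuclideanSpace ℝ (Fin n)) :
    |c * exp (c * x i) * cos (c * x k)| ≤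
      ‖gradient (fun y : EuclideanSpace ℝ (Fin n) => exp (c * y i) * sin (c * y k)) x‖ := by
  have h := abs_fderiv_apply_le_norm_gradient
    (fun y : EuclideanSpace ℝ (Fin n) => exp (c * y i) * sin (c * y k)) x
    (EuclideanSpace.single k 1)
  rw [fderiv_mul_comp_coord_apply_single (hasDerivAt_exp_const_mul c)
    (hasDerivAt_sin_const_mul c), if_neg hik, if_pos rfl, PiLp.norm_single] at h
  simpa [mul_left_comm, mul_assoc] using h

/-- The function `f(x) = exp(π x₁ / 2) · sin(π xₙ / 2)` is harmonic on `ℝⁿ`, non-negative on the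
slab `{0 ≤ xₙ ≤ 2}`, vanishes on the boundary hyperplanes `{xₙ = 0}` and `{xₙ = 2}`, is not
identically zero on the slab, and its gradient is unbounded on `{xₙ = 0}`: the boundary gradient
bound in the Liouville theorem on the slab cannot be dropped. -/
theorem slab_counterexample (n : ℕ) (hn : 2 ≤ n) :
    let f : EuclideanSpace ℝ (Fin n) → ℝ :=
      fun x => Real.exp (π * x ⟨0, by omega⟩ / 2) * Real.sin (π * x ⟨n - 1, by omega⟩ / 2)
    (∀ x : EuclideanSpace ℝ (Fin n), laplacian f x = 0) ∧
    (∀ x : EuclideanSpace ℝ (Fin n),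
      0 ≤ x ⟨n - 1, by omega⟩ → x ⟨n - 1, by omega⟩ ≤ 2 → 0 ≤ f x) ∧
    (∀ x : EuclideanSpace ℝ (Fin n),
      x ⟨n - 1, by omega⟩ = 0 ∨ x ⟨n - 1, by omega⟩ = 2 → f x = 0) ∧
    (∃ x : EuclideanSpace ℝ (Fin n),
      0 ≤ x ⟨n - 1, by omega⟩ ∧ x ⟨n - 1, by omega⟩ ≤ 2 ∧ f x ≠ 0) ∧
    ¬ (∃ Cb : ℝ, ∀ x : EuclideanSpace ℝ (Fin n),
      x ⟨n - 1, by omega⟩ = 0 → ‖gradient f x‖ ≤ Cb) := by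
  intro f
  set i : Fin n := ⟨0, by omega⟩
  set k : Fin n := ⟨n - 1, by omega⟩
  have hik : i ≠ k := by simp [i, k, Fin.ext_iff]; omega
  have hf : f = fun y => exp (π / 2 * y i) * sin (π / 2 * y k) := by
    funext y
    simp only [f, mul_div_right_comm]
    rfl
  clear_value f
  subst hf
  refine ⟨laplacian_exp_mul_sin hik (π / 2), ?_, ?_, ?_, ?_⟩
  · intro x h0 h2
    exact mul_nonneg (exp_nonneg _)
      (sin_nonneg_of_nonneg_of_le_pi (by positivity) (by nlinarith [pi_pos]))
  · rintro x (h | h) <;> simp [h]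
  · exact ⟨EuclideanSpace.single k 1, by simp [hik]⟩
  · rintro ⟨C, hC⟩
    have hc : 0 < π / 2 := by positivity
    obtain ⟨t, ht⟩ : ∃ t, C < π / 2 * exp (π / 2 * t) :=
      (((tendsto_exp_atTop.comp (Filter.tendsto_id.const_mul_atTop hc)).const_mul_atTop
        hc).eventually_gt_atTop C).exists
    have hgrad := abs_mul_exp_mul_cos_le_norm_gradient hik (π / 2) (EuclideanSpace.single i t)
    have hbound := hC (EuclideanSpace.single i t) (by simp [hik.symm])
    simp only [PiLp.single_eq_same, ne_eq, hik.symm, not_false_eq_true, PiLp.single_eq_of_ne,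
      mul_zero, cos_zero, mul_one, abs_mul, abs_of_pos hc, abs_exp] at hgrad
    linarith
end

section
/- Let n ≥ 4 be an integer, let r > 4(n−1), and let f : (0, r] → ℝ be continuously differentiable with f′(t) ≤ 0 and t² + f(t)² ≥ 1 for all t ∈ (0, r). Assume the function ψ(t) = t^{n−2}·f′(t)/√(1 + f′(t)²) is differentiable on (0, r) with ψ′(t) ≥ −2(n−1)·t^{n−2}·(t² + f(t)²)^{−(n−1)/2} for all t ∈ (0, r), and that ψ(t) → 0 as t → 0⁺. Then f′(t) ≥ −4(n−1)·t^{2−n}·(log t + 1) for every t ∈ [4(n−1), r). -/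
open Set Real Filter Topology

/-!
Write `Ψ(u) = u^(n-2) f'(u)/√(1+f'(u)²)` for the flux. Because `u² + f(u)² ≥ 1` and
`u² + f(u)² ≥ u²`, the hypothesis on `Ψ'` gives both `Ψ' ≥ -2(n-1) u^(n-2)` and
`Ψ' ≥ -2(n-1)/u`. Integrating the first bound from `0`, where `Ψ` vanishes, gives `Ψ(1) ≥ -2`;
integrating the second from `1` gives `Ψ(t) ≥ -2(n-1)(log t + 1) =: -A`. For `t ≥ 4(n-1)` the
coefficient `t^(n-2)` is at least `2A`, and `t^(n-2) y/√(1+y²) ≥ -A` with `y = f'(t)` then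
forces `t^(n-2) y ≥ -2A`.
-/

theorem sub_le_sub_of_hasDerivAt_le {ψ φ ψ' φ' : ℝ → ℝ} {a b : ℝ} (hab : a ≤ b)
    (hψ : ∀ u ∈ Icc a b, HasDerivAt ψ (ψ' u) u) (hφ : ∀ u ∈ Icc a b, HasDerivAt φ (φ' u) u)
    (hle : ∀ u ∈ Ioo a b, φ' u ≤ ψ' u) : φ b - φ a ≤ ψ b - ψ a := by
  have hmono : MonotoneOn (ψ - φ) (Icc a b) :=
    monotoneOn_of_hasDerivWithinAt_nonneg (convex_Icc a b)
      (fun u hu => ((hψ u hu).sub (hφ u hu)).continuousAt.continuousWithinAt)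
      (fun u hu =>
        ((hψ u (interior_subset hu)).sub (hφ u (interior_subset hu))).hasDerivWithinAt)
      (fun u hu => sub_nonneg.2 (hle u (by rwa [interior_Icc] at hu)))
  have h := hmono (left_mem_Icc.2 hab) (right_mem_Icc.2 hab) hab
  simp only [Pi.sub_apply] at h
  linarith

theorem sub_le_sub_of_hasDerivAt_le_of_tendsto_nhdsGT {ψ φ ψ' φ' : ℝ → ℝ} {a b α β : ℝ}
    (hab : a < b) (hψ : ∀ u ∈ Ioc a b, HasDerivAt ψ (ψ' u) u)
    (hφ : ∀ u ∈ Ioc a b, HasDerivAt φ (φ' u) u) (hle : ∀ u ∈ Ioc a b, φ' u ≤ ψ' u)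
    (hψa : Tendsto ψ (𝓝[>] a) (𝓝 α)) (hφa : Tendsto φ (𝓝[>] a) (𝓝 β)) :
    φ b - β ≤ ψ b - α := by
  have hev : ∀ᶠ u in 𝓝[>] a, φ b - φ u ≤ ψ b - ψ u := by
    filter_upwards [Ioo_mem_nhdsGT hab] with u hu
    have hsub : Icc u b ⊆ Ioc a b := Icc_subset_Ioc_iff hu.2.le |>.2 ⟨hu.1, le_rfl⟩
    exact sub_le_sub_of_hasDerivAt_le hu.2.le (fun v hv => hψ v (hsub hv))
      (fun v hv => hφ v (hsub hv)) (fun v hv => hle v (hsub (Ioo_subset_Icc_self hv)))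
  exact le_of_tendsto_of_tendsto (tendsto_const_nhds.sub hφa) (tendsto_const_nhds.sub hψa)
    hev

theorem neg_le_of_hasDerivAt_ge_neg_mul_rpow {Ψ Ψ' : ℝ → ℝ} {c k : ℝ} (hk : 0 < k)
    (hΨ : ∀ u ∈ Ioc 0 1, HasDerivAt Ψ (Ψ' u) u)
    (hle : ∀ u ∈ Ioc 0 1, -(c * k) * u ^ (k - 1) ≤ Ψ' u)
    (hΨ0 : Tendsto Ψ (𝓝[>] 0) (𝓝 0)) : -c ≤ Ψ 1 := by
  have hpow : Tendsto (fun u : ℝ => -c * u ^ k) (𝓝[>] 0) (𝓝 0) := by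
    have h := ((continuousAt_rpow_const 0 k (Or.inr hk.le)).tendsto.const_mul (-c))
    rw [zero_rpow hk.ne', mul_zero] at h
    exact h.mono_left nhdsWithin_le_nhds
  have h := sub_le_sub_of_hasDerivAt_le_of_tendsto_nhdsGT one_pos hΨ
    (fun u hu => (hasDerivAt_rpow_const (Or.inl hu.1.ne')).const_mul (-c))
    (fun u hu => by linarith [hle u hu]) hΨ0 hpow
  simpa only [one_rpow, mul_one, sub_zero] using h

theorem sub_mul_log_le_of_hasDerivAt_ge_neg_mul_inv {Ψ Ψ' : ℝ → ℝ} {c t : ℝ}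
    (ht : 1 ≤ t)
    (hΨ : ∀ u ∈ Icc 1 t, HasDerivAt Ψ (Ψ' u) u)
    (hle : ∀ u ∈ Icc 1 t, -c * u⁻¹ ≤ Ψ' u) : Ψ 1 - c * log t ≤ Ψ t := by
  have h := sub_le_sub_of_hasDerivAt_le ht hΨ
    (fun u hu => (hasDerivAt_log (one_pos.trans_le hu.1).ne').const_mul (-c))
    (fun u hu => by linarith [hle u (Ioo_subset_Icc_self hu)])
  rw [log_one] at h
  linarith

theorem sq_add_sq_rpow_neg_half_le {u v κ : ℝ} (hu : 0 < u) (hκ : 0 ≤ κ) :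
    (u ^ 2 + v ^ 2) ^ (-(κ / 2)) ≤ u ^ (-κ) := by
  calc (u ^ 2 + v ^ 2) ^ (-(κ / 2))
      ≤ (u ^ 2) ^ (-(κ / 2)) :=
        rpow_le_rpow_of_nonpos (by positivity) (by nlinarith [sq_nonneg v]) (by linarith)
    _ = u ^ (-κ) := by
        rw [← rpow_natCast, ← rpow_mul hu.le]
        ring_nf

section FluxDerivative

variable {m u v d : ℝ}

theorem neg_mul_rpow_le_of_sq_add_sq_rpow_bound (hm : 1 ≤ m) (hu : 0 < u)
    (hv : 1 ≤ u ^ 2 + v ^ 2)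
    (h : -(2 * (m - 1)) * u ^ (m - 2) * (u ^ 2 + v ^ 2) ^ (-((m - 1) / 2)) ≤ d) :
    -(2 * (m - 1)) * u ^ (m - 2) ≤ d := by
  have hX : (u ^ 2 + v ^ 2) ^ (-((m - 1) / 2)) ≤ 1 :=
    rpow_le_one_of_one_le_of_nonpos hv (by linarith)
  have hcoef : -(2 * (m - 1)) * u ^ (m - 2) ≤ 0 :=
    mul_nonpos_of_nonpos_of_nonneg (by linarith) (rpow_nonneg hu.le _)
  nlinarith

theorem neg_mul_inv_le_of_sq_add_sq_rpow_bound (hm : 1 ≤ m) (hu : 0 < u)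
    (h : -(2 * (m - 1)) * u ^ (m - 2) * (u ^ 2 + v ^ 2) ^ (-((m - 1) / 2)) ≤ d) :
    -(2 * (m - 1)) * u⁻¹ ≤ d := by
  have hcoef : -(2 * (m - 1)) * u ^ (m - 2) ≤ 0 :=
    mul_nonpos_of_nonpos_of_nonneg (by linarith) (rpow_nonneg hu.le _)
  calc -(2 * (m - 1)) * u⁻¹ = -(2 * (m - 1)) * u ^ (m - 2) * u ^ (-(m - 1)) := by
        rw [mul_assoc _ (u ^ (m - 2)), ← rpow_add hu, ← rpow_neg_one]
        ring_nf
    _ ≤ -(2 * (m - 1)) * u ^ (m - 2) * (u ^ 2 + v ^ 2) ^ (-((m - 1) / 2)) :=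
        mul_le_mul_of_nonpos_left (sq_add_sq_rpow_neg_half_le hu (by linarith)) hcoef
    _ ≤ d := h

end FluxDerivative

theorem mul_log_add_one_le_rpow {c t e : ℝ} (hct : c ≤ t) (ht : 1 ≤ t) (he : 2 ≤ e) :
    c * (log t + 1) ≤ t ^ e := by
  have hlog : log t + 1 ≤ t := by linarith [log_le_sub_one_of_pos (one_pos.trans_le ht)]
  calc c * (log t + 1) ≤ t * t := mul_le_mul hct hlog (by linarith [log_nonneg ht]) (by linarith)
    _ = t ^ (2 : ℝ) := by rw [rpow_two, sq]
    _ ≤ t ^ e := rpow_le_rpow_of_exponent_le ht he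

theorem neg_two_mul_le_mul_of_neg_le_mul_div_sqrt {A p y : ℝ} (hA : 0 < A) (hAp : 2 * A ≤ p)
    (h : -A ≤ p * y / √(1 + y ^ 2)) : -(2 * A) ≤ p * y := by
  rcases le_or_gt 0 y with hy | hy
  · nlinarith
  have hsqrt : √(1 + y ^ 2) ≤ 1 - y := sqrt_le_iff.2 ⟨by linarith, by nlinarith⟩
  have h' : -A * √(1 + y ^ 2) ≤ p * y := (le_div_iff₀ (by positivity)).1 h
  nlinarith [sqrt_nonneg (1 + y ^ 2)]

theorem gradient_estimate_height_bound_general (n : ℕ) (hn : 4 ≤ n) (r : ℝ) (f f' ψ' : ℝ → ℝ)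
    (hgeom : ∀ t ∈ Set.Ioo (0 : ℝ) r, 1 ≤ t ^ 2 + f t ^ 2)
    (hψderiv : ∀ t ∈ Set.Ioo (0 : ℝ) r,
      HasDerivAt (fun u => u ^ ((n : ℝ) - 2) * f' u / Real.sqrt (1 + f' u ^ 2)) (ψ' t) t)
    (hψ'ge : ∀ t ∈ Set.Ioo (0 : ℝ) r,
      -(2 * ((n : ℝ) - 1)) * t ^ ((n : ℝ) - 2) * (t ^ 2 + f t ^ 2) ^ (-(((n : ℝ) - 1) / 2))
        ≤ ψ' t)
    (hψ0 : Filter.Tendsto (fun u => u ^ ((n : ℝ) - 2) * f' u / Real.sqrt (1 + f' u ^ 2))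
      (nhdsWithin 0 (Set.Ioi 0)) (nhds 0)) :
    ∀ t ∈ Set.Ico (4 * ((n : ℝ) - 1)) r,
      -(4 * ((n : ℝ) - 1)) * t ^ (2 - (n : ℝ)) * (Real.log t + 1) ≤ f' t := by
  rintro t ⟨ht, htr⟩
  have hn' : (4 : ℝ) ≤ n := by exact_mod_cast hn
  have ht1 : 1 ≤ t := by linarith
  have hIoc : Ioc 0 1 ⊆ Ioo 0 r := fun u hu => ⟨hu.1, by linarith [hu.2]⟩
  have hIcc : Icc 1 t ⊆ Ioo 0 r := fun u hu => ⟨by linarith [hu.1], by linarith [hu.2]⟩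
  have hΨ1 := neg_le_of_hasDerivAt_ge_neg_mul_rpow (c := 2) (k := n - 1) (by linarith)
    (fun u hu => hψderiv u (hIoc hu))
    (fun u hu => by
      simpa only [sub_sub, one_add_one_eq_two] using neg_mul_rpow_le_of_sq_add_sq_rpow_bound
        (by linarith) hu.1 (hgeom u (hIoc hu)) (hψ'ge u (hIoc hu)))
    hψ0
  have hΨt := sub_mul_log_le_of_hasDerivAt_ge_neg_mul_inv (c := 2 * (n - 1)) ht1
    (fun u hu => hψderiv u (hIcc hu))
    (fun u hu => neg_mul_inv_le_of_sq_add_sq_rpow_bound (by linarith) (hIcc hu).1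
      (hψ'ge u (hIcc hu)))
  have hflux : -(2 * (n - 1) * (log t + 1)) ≤ t ^ ((n : ℝ) - 2) * f' t / √(1 + f' t ^ 2) := by
    linarith
  have hcoef := mul_log_add_one_le_rpow (e := n - 2) ht ht1 (by linarith)
  have key := neg_two_mul_le_mul_of_neg_le_mul_div_sqrt (by nlinarith [log_nonneg ht1])
    (by linarith) hflux
  calc -(4 * ((n : ℝ) - 1)) * t ^ (2 - (n : ℝ)) * (log t + 1)
      = -(2 * (2 * (n - 1) * (log t + 1))) / t ^ ((n : ℝ) - 2) := by
        rw [show (2 : ℝ) - n = -(n - 2) by ring, rpow_neg (by linarith)]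
        ring
    _ ≤ f' t := (div_le_iff₀ (by positivity)).2 (by linarith)

/-- **Gradient estimate** from the proof of Lemma 5.6 ('height bound'). If `f : (0, r] → ℝ` is a
continuously differentiable radial profile with `f' ≤ 0`, `t² + f(t)² ≥ 1`, and the flux
`ψ(t) = t^(n-2) f'(t)/√(1+f'(t)²)` satisfies `ψ'(t) ≥ -2(n-1) t^(n-2) (t²+f(t)²)^(-(n-1)/2)` and
`ψ(t) → 0` as `t → 0⁺`, then `f'(t) ≥ -4(n-1) t^(2-n) (log t + 1)` for `t ∈ [4(n-1), r)`. -/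
theorem gradient_estimate_height_bound (n : ℕ) (hn : 4 ≤ n) (r : ℝ)
    (hr : 4 * ((n : ℝ) - 1) < r) (f f' ψ' : ℝ → ℝ)
    (hderiv : ∀ t ∈ Set.Ioo (0 : ℝ) r, HasDerivAt f (f' t) t)
    (hfcont : ContinuousOn f (Set.Ioc 0 r))
    (hf'cont : ContinuousOn f' (Set.Ioc 0 r))
    (hf'nonpos : ∀ t ∈ Set.Ioo (0 : ℝ) r, f' t ≤ 0)
    (hgeom : ∀ t ∈ Set.Ioo (0 : ℝ) r, 1 ≤ t ^ 2 + f t ^ 2)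
    (hψderiv : ∀ t ∈ Set.Ioo (0 : ℝ) r,
      HasDerivAt (fun u => u ^ ((n : ℝ) - 2) * f' u / Real.sqrt (1 + f' u ^ 2)) (ψ' t) t)
    (hψ'ge : ∀ t ∈ Set.Ioo (0 : ℝ) r,
      -(2 * ((n : ℝ) - 1)) * t ^ ((n : ℝ) - 2) * (t ^ 2 + f t ^ 2) ^ (-(((n : ℝ) - 1) / 2))
        ≤ ψ' t)
    (hψ0 : Filter.Tendsto (fun u => u ^ ((n : ℝ) - 2) * f' u / Real.sqrt (1 + f' u ^ 2))
      (nhdsWithin 0 (Set.Ioi 0)) (nhds 0)) :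
    ∀ t ∈ Set.Ico (4 * ((n : ℝ) - 1)) r,
      -(4 * ((n : ℝ) - 1)) * t ^ (2 - (n : ℝ)) * (Real.log t + 1) ≤ f' t :=
  gradient_estimate_height_bound_general n hn r f f' ψ' hgeom hψderiv hψ'ge hψ0
end

section
/- Let n ≥ 4 be an integer, let r > 4(n−1), and let f : (0, r] → ℝ be continuously differentiable with f′(t) ≤ 0 and t² + f(t)² ≥ 1 for all t ∈ (0, r). Assume the function ψ(t) = t^{n−2}·f′(t)/√(1 + f′(t)²) is differentiable on (0, r) with ψ′(t) ≥ −2(n−1)·t^{n−2}·(t² + f(t)²)^{−(n−1)/2} for all t ∈ (0, r), and that ψ(t) → 0 as t → 0⁺. Then the improper integral ∫_t^∞ s^{2−n}(log s + 1) ds is finite for every t ≥ 4(n−1), and f(r) ≤ f(t) ≤ f(r) + 4(n−1)·∫_t^∞ s^{2−n}(log s + 1) ds for every t ∈ [4(n−1), r]. -/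
open MeasureTheory Set Real Filter

open Asymptotics Topology

/-!
Write `ψ = t^(n-2) f' / √(1 + f'²)`. Integrating the differential inequality for `ψ` bounds it
from below: on `(0, 1]` the factor `(t² + f²)^(-(n-1)/2)` is at most `1`, so `ψ(0⁺) = 0` gives
`ψ(1) ≥ -2`; on `[1, r)` it is at most `t^(1-n)`, so `ψ(s) ≥ -2(n-1)(log s + 1)`. For
`s ≥ 4(n-1)` this reads `f'/√(1 + f'²) ≥ -c` with `c = 2(n-1) s^(2-n) (log s + 1) ≤ 1/2`,
which forces `f' ≥ -2c`; integrating `f'` from `t` to `r` gives the height bound.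
-/

theorem integrableOn_rpow_mul_log_add_one_Ici {p t : ℝ} (hp : p < -1) (ht : 0 < t) :
    IntegrableOn (fun s : ℝ => s ^ p * (log s + 1)) (Ici t) := by
  obtain ⟨ε, hε, hpε⟩ : ∃ ε : ℝ, 0 < ε ∧ p + ε < -1 :=
    ⟨(-1 - p) / 2, by linarith, by linarith⟩
  have hcont : ContinuousOn (fun s : ℝ => s ^ p * (log s + 1)) (Ici t) := fun s hs =>
    have hs0 : s ≠ 0 := (ht.trans_le hs).ne'
    ((continuousAt_rpow_const s p (.inl hs0)).mul
      ((continuousAt_log hs0).add continuousAt_const)).continuousWithinAt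
  have hlog : (fun s : ℝ => log s + 1) =O[atTop] fun s => s ^ ε :=
    (isLittleO_log_rpow_atTop hε).isBigO.add ((isLittleO_one_left_iff ℝ).2 <|
      tendsto_norm_atTop_atTop.comp (tendsto_rpow_atTop hε)).isBigO
  have ho : (fun s : ℝ => s ^ p * (log s + 1)) =O[atTop] fun s => s ^ (p + ε) :=
    ((isBigO_refl (fun s : ℝ => s ^ p) atTop).mul hlog).trans_eventuallyEq <| by
      filter_upwards [eventually_gt_atTop (0 : ℝ)] with s hs using (rpow_add hs p ε).symm
  exact (hcont.locallyIntegrableOn measurableSet_Ici).integrableOn_of_isBigO_atTop ho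
    (integrableAtFilter_rpow_atTop_iff.2 hpε)

theorem le_of_tendsto_nhdsGT_of_hasDerivAt_nonneg {F F' : ℝ → ℝ} {a b L : ℝ} (hab : a < b)
    (hF : ∀ x ∈ Ioc a b, HasDerivAt F (F' x) x) (hF' : ∀ x ∈ Ioo a b, 0 ≤ F' x)
    (hlim : Tendsto F (𝓝[>] a) (𝓝 L)) : L ≤ F b := by
  have hmono : MonotoneOn F (Ioc a b) :=
    monotoneOn_of_hasDerivWithinAt_nonneg (convex_Ioc a b)
      (fun x hx => (hF x hx).continuousAt.continuousWithinAt)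
      (by rw [interior_Ioc]; exact fun x hx => (hF x (Ioo_subset_Ioc_self hx)).hasDerivWithinAt)
      (by rwa [interior_Ioc])
  refine le_of_tendsto hlim ?_
  filter_upwards [Ioc_mem_nhdsGT hab] with x hx
  exact hmono hx (right_mem_Ioc.2 hab) hx.2

theorem sq_add_sq_rpow_neg_le {n t y : ℝ} (hn : 1 ≤ n) (ht : 0 < t) :
    (t ^ 2 + y ^ 2) ^ (-((n - 1) / 2)) ≤ t ^ (-(n - 1)) :=
  calc (t ^ 2 + y ^ 2) ^ (-((n - 1) / 2)) ≤ (t ^ 2) ^ (-((n - 1) / 2)) :=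
        rpow_le_rpow_of_nonpos (by positivity) (by nlinarith) (by linarith)
    _ = t ^ (-(n - 1)) := by
        rw [← rpow_natCast, ← rpow_mul ht.le]; push_cast; ring_nf

theorem rpow_mul_log_add_one_le_inv {p s : ℝ} (hp : p ≤ -2) (hs : 1 ≤ s) :
    s ^ p * (log s + 1) ≤ s⁻¹ := by
  have hs0 : 0 < s := by linarith
  have hlog : log s + 1 ≤ s := by linarith [log_le_sub_one_of_pos hs0]
  calc s ^ p * (log s + 1) ≤ s ^ (-2 : ℝ) * s :=
        mul_le_mul (rpow_le_rpow_of_exponent_le hs hp) hlog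
          (by linarith [log_nonneg hs]) (by positivity)
    _ = s⁻¹ := by
        rw [rpow_neg hs0.le, rpow_two]; field_simp

theorem neg_two_mul_le_of_neg_le_div_sqrt {x c : ℝ} (hc0 : 0 ≤ c) (hc : c ≤ 1 / 2)
    (h : -c ≤ x / √(1 + x ^ 2)) : -(2 * c) ≤ x := by
  rcases le_or_gt 0 x with hx | hx
  · linarith
  have hq : 0 < √(1 + x ^ 2) := sqrt_pos.2 (by positivity)
  have hq2 : √(1 + x ^ 2) ^ 2 = 1 + x ^ 2 := sq_sqrt (by positivity)
  rw [le_div_iff₀ hq] at h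
  -- squaring `-x ≤ c √(1 + x²)` gives `x² (1 - c²) ≤ c²`, and `1 - c² ≥ 3/4`
  have hsq : x ^ 2 ≤ c ^ 2 * (1 + x ^ 2) := by
    rw [← hq2]; nlinarith [mul_nonneg hc0 hq.le]
  have hc2 : c ^ 2 ≤ 1 / 4 := by nlinarith
  have hcx : c ^ 2 * x ^ 2 ≤ x ^ 2 / 4 := by
    nlinarith [mul_le_mul_of_nonneg_right hc2 (sq_nonneg x)]
  nlinarith

section Flux

variable {n b : ℝ} {f ψ ψ' : ℝ → ℝ}

theorem neg_two_le_of_tendsto_nhdsGT_zero (hn : 1 < n) (hb : 1 < b)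
    (hψ : ∀ t ∈ Ioo 0 b, HasDerivAt ψ (ψ' t) t)
    (hψ' : ∀ t ∈ Ioo 0 b,
      -(2 * (n - 1)) * t ^ (n - 2) * (t ^ 2 + f t ^ 2) ^ (-((n - 1) / 2)) ≤ ψ' t)
    (hgeom : ∀ t ∈ Ioo 0 b, 1 ≤ t ^ 2 + f t ^ 2)
    (hψ0 : Tendsto ψ (𝓝[>] 0) (𝓝 0)) : -2 ≤ ψ 1 := by
  have hpow : Tendsto (fun t : ℝ => 2 * t ^ (n - 1)) (𝓝[>] 0) (𝓝 0) := by
    simpa [zero_rpow (by linarith : n - 1 ≠ 0)] using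
      ((continuousAt_rpow_const 0 (n - 1) (.inr (by linarith))).tendsto.mono_left
        nhdsWithin_le_nhds).const_mul 2
  have hmono := le_of_tendsto_nhdsGT_of_hasDerivAt_nonneg (F := fun t => ψ t + 2 * t ^ (n - 1))
    (F' := fun t => ψ' t + 2 * ((n - 1) * t ^ (n - 2))) zero_lt_one ?_ ?_
    (by simpa using hψ0.add hpow)
  · simp only [one_rpow, mul_one] at hmono
    linarith
  · intro t ht
    have hpow' := (hasDerivAt_rpow_const (p := n - 1) (.inl ht.1.ne')).const_mul 2
    rw [show n - 1 - 1 = n - 2 by ring] at hpow'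
    exact (hψ t ⟨ht.1, ht.2.trans_lt hb⟩).add hpow'
  · intro t ht
    have ht' : t ∈ Ioo 0 b := ⟨ht.1, ht.2.trans hb⟩
    have hle : (t ^ 2 + f t ^ 2) ^ (-((n - 1) / 2)) ≤ 1 :=
      rpow_le_one_of_one_le_of_nonpos (hgeom t ht') (by linarith)
    have hc : 0 ≤ 2 * (n - 1) * t ^ (n - 2) := mul_nonneg (by linarith) (rpow_nonneg ht.1.le _)
    nlinarith [hψ' t ht', mul_le_mul_of_nonneg_left hle hc]

theorem sub_mul_log_le_of_hasDerivAt (hn : 1 ≤ n)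
    (hψ : ∀ t ∈ Ioo 0 b, HasDerivAt ψ (ψ' t) t)
    (hψ' : ∀ t ∈ Ioo 0 b,
      -(2 * (n - 1)) * t ^ (n - 2) * (t ^ 2 + f t ^ 2) ^ (-((n - 1) / 2)) ≤ ψ' t)
    {s : ℝ} (hs : s ∈ Ioo 1 b) : ψ 1 - 2 * (n - 1) * log s ≤ ψ s := by
  have hcont : ContinuousAt (fun t => ψ t + 2 * (n - 1) * log t) 1 :=
    (hψ 1 ⟨one_pos, hs.1.trans hs.2⟩).continuousAt.add
      (continuousAt_const.mul (continuousAt_log one_ne_zero))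
  have hmono := le_of_tendsto_nhdsGT_of_hasDerivAt_nonneg
    (F' := fun t => ψ' t + 2 * (n - 1) * t⁻¹) hs.1 ?_ ?_
    (hcont.tendsto.mono_left nhdsWithin_le_nhds)
  · simp only [log_one, mul_zero, add_zero] at hmono
    linarith
  · intro t ht
    have ht0 : 0 < t := one_pos.trans ht.1
    exact (hψ t ⟨ht0, ht.2.trans_lt hs.2⟩).add ((hasDerivAt_log ht0.ne').const_mul _)
  · intro t ht
    have ht0 : 0 < t := one_pos.trans ht.1
    have hinv : t ^ (n - 2) * t ^ (-(n - 1)) = t⁻¹ := by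
      rw [← rpow_add ht0, show n - 2 + -(n - 1) = -1 by ring, rpow_neg_one]
    have hc : 0 ≤ 2 * (n - 1) * t ^ (n - 2) := mul_nonneg (by linarith) (rpow_nonneg ht0.le _)
    have hle := mul_le_mul_of_nonneg_left (sq_add_sq_rpow_neg_le (y := f t) hn ht0) hc
    rw [mul_assoc (2 * (n - 1)) (t ^ (n - 2)) (t ^ (-(n - 1))), hinv] at hle
    nlinarith [hψ' t ⟨ht0, ht.2.trans hs.2⟩]

theorem neg_mul_log_add_one_le_of_hasDerivAt (hn : 2 ≤ n)
    (hψ : ∀ t ∈ Ioo 0 b, HasDerivAt ψ (ψ' t) t)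
    (hψ' : ∀ t ∈ Ioo 0 b,
      -(2 * (n - 1)) * t ^ (n - 2) * (t ^ 2 + f t ^ 2) ^ (-((n - 1) / 2)) ≤ ψ' t)
    (hgeom : ∀ t ∈ Ioo 0 b, 1 ≤ t ^ 2 + f t ^ 2)
    (hψ0 : Tendsto ψ (𝓝[>] 0) (𝓝 0)) {s : ℝ} (hs : s ∈ Ioo 1 b) :
    -(2 * (n - 1)) * (log s + 1) ≤ ψ s := by
  have h1 := neg_two_le_of_tendsto_nhdsGT_zero (by linarith) (hs.1.trans hs.2) hψ hψ' hgeom hψ0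
  have h2 := sub_mul_log_le_of_hasDerivAt (by linarith) hψ hψ' hs
  linarith

end Flux

theorem neg_le_of_neg_mul_log_add_one_le_flux {n s x : ℝ} (hn : 4 ≤ n) (hs : 4 * (n - 1) ≤ s)
    (h : -(2 * (n - 1)) * (log s + 1) ≤ s ^ (n - 2) * x / √(1 + x ^ 2)) :
    -(4 * (n - 1) * (s ^ (2 - n) * (log s + 1))) ≤ x := by
  have hs1 : 1 ≤ s := by linarith
  have hs0 : 0 < s := by linarith
  set c := 2 * (n - 1) * (s ^ (2 - n) * (log s + 1))
  have hc0 : 0 ≤ c :=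
    mul_nonneg (by linarith) (mul_nonneg (rpow_nonneg hs0.le _) (by linarith [log_nonneg hs1]))
  have hc : c ≤ 1 / 2 :=
    calc c ≤ 2 * (n - 1) * s⁻¹ :=
          mul_le_mul_of_nonneg_left (rpow_mul_log_add_one_le_inv (by linarith) hs1) (by linarith)
      _ ≤ 1 / 2 := by
          rw [← div_eq_mul_inv, div_le_iff₀ hs0]; linarith
  have hcancel : s ^ (2 - n) * s ^ (n - 2) = 1 := by
    rw [← rpow_add hs0, show 2 - n + (n - 2) = 0 by ring, rpow_zero]
  have hquot : -c ≤ x / √(1 + x ^ 2) := by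
    rw [mul_div_assoc] at h
    calc -c = s ^ (2 - n) * (-(2 * (n - 1)) * (log s + 1)) := by ring
      _ ≤ s ^ (2 - n) * (s ^ (n - 2) * (x / √(1 + x ^ 2))) :=
          mul_le_mul_of_nonneg_left h (rpow_nonneg hs0.le _)
      _ = x / √(1 + x ^ 2) := by rw [← mul_assoc, hcancel, one_mul]
  linarith [neg_two_mul_le_of_neg_le_div_sqrt hc0 hc hquot]

theorem le_add_setIntegral_Ici_of_neg_le_deriv {f f' g : ℝ → ℝ} {a b : ℝ} (hab : a ≤ b)
    (hf : ContinuousOn f (Icc a b)) (hderiv : ∀ x ∈ Ioo a b, HasDerivAt f (f' x) x)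
    (hg : IntegrableOn g (Ici a)) (hg0 : ∀ x ∈ Ici a, 0 ≤ g x)
    (hfg : ∀ x ∈ Ioo a b, -g x ≤ f' x) : f a ≤ f b + ∫ x in Ici a, g x := by
  have hFTC : ∫ x in a..b, -g x ≤ f b - f a :=
    intervalIntegral.integral_le_sub_of_hasDeriv_right_of_le hab hf
      (fun x hx => (hderiv x hx).hasDerivWithinAt) (hg.mono_set Icc_subset_Ici_self).neg hfg
  have hmono : ∫ x in a..b, g x ≤ ∫ x in Ici a, g x := by
    rw [intervalIntegral.integral_of_le hab]
    exact setIntegral_mono_set hg ((ae_restrict_iff' measurableSet_Ici).2 (ae_of_all _ hg0))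
      (Ioc_subset_Ioi_self.trans Ioi_subset_Ici_self).eventuallyLE
  rw [intervalIntegral.integral_neg] at hFTC
  linarith

theorem height_bound_general (n : ℕ) (hn : 4 ≤ n) (r : ℝ)
    (f f' ψ' : ℝ → ℝ)
    (hderiv : ∀ t ∈ Set.Ioo (0 : ℝ) r, HasDerivAt f (f' t) t)
    (hfcont : ContinuousOn f (Set.Ioc 0 r))
    (hf'nonpos : ∀ t ∈ Set.Ioo (0 : ℝ) r, f' t ≤ 0)
    (hgeom : ∀ t ∈ Set.Ioo (0 : ℝ) r, 1 ≤ t ^ 2 + f t ^ 2)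
    (hψderiv : ∀ t ∈ Set.Ioo (0 : ℝ) r,
      HasDerivAt (fun u => u ^ ((n : ℝ) - 2) * f' u / Real.sqrt (1 + f' u ^ 2)) (ψ' t) t)
    (hψ'ge : ∀ t ∈ Set.Ioo (0 : ℝ) r,
      -(2 * ((n : ℝ) - 1)) * t ^ ((n : ℝ) - 2) * (t ^ 2 + f t ^ 2) ^ (-(((n : ℝ) - 1) / 2))
        ≤ ψ' t)
    (hψ0 : Filter.Tendsto (fun u => u ^ ((n : ℝ) - 2) * f' u / Real.sqrt (1 + f' u ^ 2))
      (nhdsWithin 0 (Set.Ioi 0)) (nhds 0)) :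
    (∀ t : ℝ, 4 * ((n : ℝ) - 1) ≤ t →
      IntegrableOn (fun s : ℝ => s ^ (2 - (n : ℝ)) * (Real.log s + 1)) (Set.Ici t)) ∧
    (∀ t ∈ Set.Icc (4 * ((n : ℝ) - 1)) r,
      f r ≤ f t ∧
      f t ≤ f r + 4 * ((n : ℝ) - 1) * ∫ s in Set.Ici t, s ^ (2 - (n : ℝ)) * (Real.log s + 1)) := by
  have hn' : (4 : ℝ) ≤ n := by exact_mod_cast hn
  have hint : ∀ t : ℝ, 4 * ((n : ℝ) - 1) ≤ t →
      IntegrableOn (fun s : ℝ => s ^ (2 - (n : ℝ)) * (log s + 1)) (Ici t) := fun t ht =>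
    integrableOn_rpow_mul_log_add_one_Ici (by linarith) (by linarith)
  refine ⟨hint, fun t ⟨hta, htr⟩ => ?_⟩
  have ht1 : 1 < t := by linarith
  have hfIcc : ContinuousOn f (Icc t r) := hfcont.mono fun x hx => ⟨by linarith [hx.1], hx.2⟩
  have hfIoo : ∀ x ∈ Ioo t r, HasDerivAt f (f' x) x := fun x hx =>
    hderiv x ⟨by linarith [hx.1], hx.2⟩
  have hanti : AntitoneOn f (Icc t r) := by
    refine antitoneOn_of_hasDerivWithinAt_nonpos (f' := f') (convex_Icc t r) hfIcc ?_ ?_ <;>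
      rw [interior_Icc]
    · exact fun x hx => (hfIoo x hx).hasDerivWithinAt
    · exact fun x hx => hf'nonpos x ⟨by linarith [hx.1], hx.2⟩
  have hf'ge :
      ∀ s ∈ Ioo t r, -(4 * ((n : ℝ) - 1) * (s ^ (2 - (n : ℝ)) * (log s + 1))) ≤ f' s :=
    fun s hs => neg_le_of_neg_mul_log_add_one_le_flux hn' (hta.trans hs.1.le)
      (neg_mul_log_add_one_le_of_hasDerivAt (by linarith) hψderiv hψ'ge hgeom hψ0
        ⟨ht1.trans hs.1, hs.2⟩)
  have hheight := le_add_setIntegral_Ici_of_neg_le_deriv htr hfIcc hfIoo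
    ((hint t hta).const_mul (4 * ((n : ℝ) - 1))) (fun s hs => ?_) hf'ge
  · rw [integral_const_mul] at hheight
    exact ⟨hanti (left_mem_Icc.2 htr) (right_mem_Icc.2 htr) htr, hheight⟩
  · have hs1 : 1 ≤ s := by linarith [mem_Ici.1 hs]
    exact mul_nonneg (by linarith)
      (mul_nonneg (rpow_nonneg (by linarith) _) (by linarith [log_nonneg hs1]))

/-- **Height bound** (analytic content of Lemma 5.6). Under the hypotheses of the gradient
estimate for the radial profiles of area-minimizing graphs in spatial Schwarzschild, the improper
integral `∫_t^∞ s^(2-n) (log s + 1) ds` is finite for every `t ≥ 4(n-1)`, and the height is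
controlled: `f(r) ≤ f(t) ≤ f(r) + 4(n-1) ∫_t^∞ s^(2-n) (log s + 1) ds` on `[4(n-1), r]`. -/
theorem height_bound (n : ℕ) (hn : 4 ≤ n) (r : ℝ)
    (hr : 4 * ((n : ℝ) - 1) < r) (f f' ψ' : ℝ → ℝ)
    (hderiv : ∀ t ∈ Set.Ioo (0 : ℝ) r, HasDerivAt f (f' t) t)
    (hfcont : ContinuousOn f (Set.Ioc 0 r))
    (hf'cont : ContinuousOn f' (Set.Ioc 0 r))
    (hf'nonpos : ∀ t ∈ Set.Ioo (0 : ℝ) r, f' t ≤ 0)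
    (hgeom : ∀ t ∈ Set.Ioo (0 : ℝ) r, 1 ≤ t ^ 2 + f t ^ 2)
    (hψderiv : ∀ t ∈ Set.Ioo (0 : ℝ) r,
      HasDerivAt (fun u => u ^ ((n : ℝ) - 2) * f' u / Real.sqrt (1 + f' u ^ 2)) (ψ' t) t)
    (hψ'ge : ∀ t ∈ Set.Ioo (0 : ℝ) r,
      -(2 * ((n : ℝ) - 1)) * t ^ ((n : ℝ) - 2) * (t ^ 2 + f t ^ 2) ^ (-(((n : ℝ) - 1) / 2))
        ≤ ψ' t)
    (hψ0 : Filter.Tendsto (fun u => u ^ ((n : ℝ) - 2) * f' u / Real.sqrt (1 + f' u ^ 2))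
      (nhdsWithin 0 (Set.Ioi 0)) (nhds 0)) :
    (∀ t : ℝ, 4 * ((n : ℝ) - 1) ≤ t →
      IntegrableOn (fun s : ℝ => s ^ (2 - (n : ℝ)) * (Real.log s + 1)) (Set.Ici t)) ∧
    (∀ t ∈ Set.Icc (4 * ((n : ℝ) - 1)) r,
      f r ≤ f t ∧
      f t ≤ f r + 4 * ((n : ℝ) - 1) * ∫ s in Set.Ici t, s ^ (2 - (n : ℝ)) * (Real.log s + 1)) :=
  height_bound_general n hn r f f' ψ' hderiv hfcont hf'nonpos hgeom hψderiv hψ'ge hψ0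
end

section
/- Let n ≥ 4 be an integer, let a > 0 and t₀ > 0 satisfy a ≤ t₀^{n−2}. Then ∫_{t₀}^∞ a·(s^{2n−4} − a²)^{−1/2} ds ≤ a^{1/(n−2)}·∫₁^∞ (u^{2n−4} − 1)^{−1/2} du, and in particular the left-hand integral is finite. -/
/-!
Substituting `s = c u` with `c = a^(1/(n-2))`, so that `c^(2n-4) = a²`, turns the integrand
`a (s^(2n-4) - a²)^(-1/2)` on `(c, ∞)` into `(u^(2n-4) - 1)^(-1/2)` on `(1, ∞)` with Jacobian `c`.
Since `a ≤ t₀^(n-2)` means `c ≤ t₀`, the integral over `(t₀, ∞)` is at most the one over `(c, ∞)`.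
The profile `(u^p - 1)^(-1/2)` is integrable on `(1, ∞)` for `p > 2`: it behaves like
`(u - 1)^(-1/2)` near `1` and like `u^(-p/2)` at infinity.
-/

open MeasureTheory Set Real

section Profile

variable {p : ℝ}

lemma continuousOn_rpow_sub_one_rpow_neg_half (hp : 0 < p) :
    ContinuousOn (fun u : ℝ => (u ^ p - 1) ^ (-(1 : ℝ) / 2)) (Ioi 1) := by
  refine ((continuousOn_id.rpow_const fun u hu => Or.inl ?_).sub continuousOn_const).rpow_const
    fun u hu => Or.inl ?_
  · exact (one_pos.trans hu).ne'
  · exact (sub_pos.2 (one_lt_rpow hu hp)).ne'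

lemma integrableOn_Ioc_one_two_rpow_sub_one_rpow_neg_half (hp : 1 ≤ p) :
    IntegrableOn (fun u : ℝ => (u ^ p - 1) ^ (-(1 : ℝ) / 2)) (Ioc 1 2) := by
  have hdom : IntegrableOn (fun u : ℝ => (u - 1) ^ (-(1 : ℝ) / 2)) (Ioc 1 2) := by
    have h := (intervalIntegral.intervalIntegrable_rpow' (a := 0) (b := 1)
      (r := -(1 : ℝ) / 2) (by norm_num)).comp_sub_right 1
    rw [zero_add, one_add_one_eq_two] at h
    exact h.1
  refine hdom.mono' ((continuousOn_rpow_sub_one_rpow_neg_half (by linarith)).mono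
    Ioc_subset_Ioi_self |>.aestronglyMeasurable measurableSet_Ioc) ?_
  refine (ae_restrict_iff' measurableSet_Ioc).2 (Filter.Eventually.of_forall fun u hu => ?_)
  have hle : u - 1 ≤ u ^ p - 1 := by
    simpa using rpow_le_rpow_of_exponent_le hu.1.le hp
  rw [norm_of_nonneg (rpow_nonneg (by linarith [hu.1]) _)]
  exact rpow_le_rpow_of_nonpos (by linarith [hu.1]) hle (by norm_num)

lemma integrableOn_Ioi_two_rpow_sub_one_rpow_neg_half (hp : 2 < p) :
    IntegrableOn (fun u : ℝ => (u ^ p - 1) ^ (-(1 : ℝ) / 2)) (Ioi 2) := by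
  have hdom : IntegrableOn (fun u : ℝ => u ^ (p * (-(1 : ℝ) / 2)) / 2 ^ (-(1 : ℝ) / 2)) (Ioi 2) :=
    (integrableOn_Ioi_rpow_of_lt (by linarith) two_pos).div_const _
  refine hdom.mono' ((continuousOn_rpow_sub_one_rpow_neg_half (by linarith)).mono
    (Ioi_subset_Ioi one_le_two) |>.aestronglyMeasurable measurableSet_Ioi) ?_
  refine (ae_restrict_iff' measurableSet_Ioi).2 (Filter.Eventually.of_forall fun u hu => ?_)
  have hu : (2 : ℝ) < u := hu
  have htwo : 2 ≤ u ^ p := calc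
    (2 : ℝ) ≤ 2 ^ p := by simpa using rpow_le_rpow_of_exponent_le one_le_two (by linarith : 1 ≤ p)
    _ ≤ u ^ p := rpow_le_rpow zero_le_two hu.le (by linarith)
  have hhalf : u ^ p / 2 ≤ u ^ p - 1 := by linarith
  rw [norm_of_nonneg (rpow_nonneg (by linarith) _), rpow_mul (by linarith),
    ← div_rpow (by linarith) zero_le_two]
  exact rpow_le_rpow_of_nonpos (by linarith) hhalf (by norm_num)

lemma integrableOn_Ioi_one_rpow_sub_one_rpow_neg_half (hp : 2 < p) :
    IntegrableOn (fun u : ℝ => (u ^ p - 1) ^ (-(1 : ℝ) / 2)) (Ioi 1) := by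
  rw [← Ioc_union_Ioi_eq_Ioi one_le_two]
  exact (integrableOn_Ioc_one_two_rpow_sub_one_rpow_neg_half (by linarith)).union
    (integrableOn_Ioi_two_rpow_sub_one_rpow_neg_half hp)

end Profile

section Scaling

variable {p a c : ℝ}

lemma mul_rpow_sub_sq_rpow_neg_half_eq (ha : 0 < a) (hc : 0 < c) (hp : 0 ≤ p)
    (hcp : c ^ p = a ^ 2) {s : ℝ} (hs : c ≤ s) :
    a * (s ^ p - a ^ 2) ^ (-(1 : ℝ) / 2) = ((c⁻¹ * s) ^ p - 1) ^ (-(1 : ℝ) / 2) := by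
  have hsub : 0 ≤ s ^ p - a ^ 2 := sub_nonneg.2 (hcp ▸ rpow_le_rpow hc.le hs hp)
  have hscale : (c⁻¹ * s) ^ p - 1 = (a ^ 2)⁻¹ * (s ^ p - a ^ 2) := by
    rw [mul_rpow (inv_nonneg.2 hc.le) (hc.le.trans hs), inv_rpow hc.le, hcp]
    field_simp
  have ha' : ((a ^ 2)⁻¹ : ℝ) ^ (-(1 : ℝ) / 2) = a := by
    rw [← rpow_natCast, ← rpow_neg ha.le, ← rpow_mul ha.le]
    norm_num
  rw [hscale, mul_rpow (by positivity) hsub, ha']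

theorem integrableOn_Ioi_and_integral_eq_of_rpow_eq_sq (ha : 0 < a) (hc : 0 < c) (hp : 0 ≤ p)
    (hcp : c ^ p = a ^ 2)
    (hint : IntegrableOn (fun u : ℝ => (u ^ p - 1) ^ (-(1 : ℝ) / 2)) (Ioi 1)) :
    IntegrableOn (fun s : ℝ => a * (s ^ p - a ^ 2) ^ (-(1 : ℝ) / 2)) (Ioi c) ∧
      ∫ s in Ioi c, a * (s ^ p - a ^ 2) ^ (-(1 : ℝ) / 2) =
        c * ∫ u in Ioi 1, (u ^ p - 1) ^ (-(1 : ℝ) / 2) := by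
  set g : ℝ → ℝ := fun u => (u ^ p - 1) ^ (-(1 : ℝ) / 2)
  have hfg : EqOn (fun s => g (c⁻¹ * s)) (fun s => a * (s ^ p - a ^ 2) ^ (-(1 : ℝ) / 2))
      (Ioi c) := fun s hs => (mul_rpow_sub_sq_rpow_neg_half_eq ha hc hp hcp hs.le).symm
  have hc₁ : c⁻¹ * c = 1 := inv_mul_cancel₀ hc.ne'
  constructor
  · refine IntegrableOn.congr_fun ?_ hfg measurableSet_Ioi
    rwa [integrableOn_Ioi_comp_mul_left_iff g c (inv_pos.2 hc), hc₁]
  · rw [← setIntegral_congr_fun measurableSet_Ioi hfg,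
      integral_comp_mul_left_Ioi g c (inv_pos.2 hc), hc₁, inv_inv, smul_eq_mul]

end Scaling

/-- **Scaling estimate** from Lemma 6.8 ('final bound'): for `n ≥ 4`, `a > 0`, `t₀ > 0` with
`a ≤ t₀^(n-2)`, the flux integral satisfies
`∫_{t₀}^∞ a (s^(2n-4) - a²)^(-1/2) ds ≤ a^(1/(n-2)) ∫₁^∞ (u^(2n-4) - 1)^(-1/2) du`,
and in particular it is finite. -/
theorem scaling_estimate (n : ℕ) (hn : 4 ≤ n) (a t₀ : ℝ) (ha : 0 < a) (ht₀ : 0 < t₀)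
    (hat : a ≤ t₀ ^ ((n : ℝ) - 2)) :
    IntegrableOn (fun s : ℝ => a * (s ^ (2 * (n : ℝ) - 4) - a ^ 2) ^ (-(1 : ℝ) / 2))
      (Set.Ioi t₀) ∧
    ∫ s in Set.Ioi t₀, a * (s ^ (2 * (n : ℝ) - 4) - a ^ 2) ^ (-(1 : ℝ) / 2)
      ≤ a ^ ((1 : ℝ) / ((n : ℝ) - 2)) *
        ∫ u in Set.Ioi (1 : ℝ), (u ^ (2 * (n : ℝ) - 4) - 1) ^ (-(1 : ℝ) / 2) := by
  have hn' : (4 : ℝ) ≤ n := by exact_mod_cast hn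
  have hct : a ^ ((1 : ℝ) / ((n : ℝ) - 2)) ≤ t₀ := by
    rwa [one_div, rpow_inv_le_iff_of_pos ha.le ht₀.le (by linarith)]
  set c := a ^ ((1 : ℝ) / ((n : ℝ) - 2))
  have hc : 0 < c := rpow_pos_of_pos ha _
  have hcp : c ^ (2 * (n : ℝ) - 4) = a ^ 2 := by
    have hq : (n : ℝ) - 2 ≠ 0 := by linarith
    rw [← rpow_mul ha.le, ← rpow_natCast, show 2 * (n : ℝ) - 4 = 2 * ((n : ℝ) - 2) by ring]
    field_simp
    norm_num
  obtain ⟨hint, heq⟩ := integrableOn_Ioi_and_integral_eq_of_rpow_eq_sq ha hc (by linarith) hcp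
    (integrableOn_Ioi_one_rpow_sub_one_rpow_neg_half (by linarith))
  have hnonneg : 0 ≤ᵐ[volume.restrict (Ioi c)]
      fun s : ℝ => a * (s ^ (2 * (n : ℝ) - 4) - a ^ 2) ^ (-(1 : ℝ) / 2) :=
    (ae_restrict_iff' measurableSet_Ioi).2 <| Filter.Eventually.of_forall fun s hs =>
      mul_nonneg ha.le (rpow_nonneg (sub_nonneg.2 (hcp ▸ rpow_le_rpow hc.le hs.le
        (by linarith))) _)
  refine ⟨hint.mono_set (Ioi_subset_Ioi hct), ?_⟩
  rw [← heq]
  exact setIntegral_mono_set hint hnonneg (Ioi_subset_Ioi hct).eventuallyLE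
end

section
/- Let n ≥ 3 be an integer, let a > 0 and t₀ > a^{1/(n−2)}, let C ∈ ℝ, and define f : [t₀, ∞) → ℝ by f(t) = C − ∫_{t₀}^t a·(s^{2n−4} − a²)^{−1/2} ds. Then f is differentiable on (t₀, ∞) and t^{n−2}·f′(t)/√(1 + f′(t)²) = −a for every t > t₀. -/
open MeasureTheory Set Real Topology

/-!
With `p = n - 2`, the hypothesis `t₀ > a^(1/p)` gives `a² < s^(2p)` for all `s ≥ t₀`, so the
integrand is continuous on `[t₀, ∞)` and the fundamental theorem of calculus gives
`f'(t) = -a (T² - a²)^(-1/2)` with `T = t^p`. Then `1 + f'² = T² / (T² - a²)`, and the flux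
`T f' / √(1 + f'²)` collapses to `-a`.
-/

theorem hasDerivAt_integral_of_continuousOn_Ici {E : Type*} [NormedAddCommGroup E]
    [NormedSpace ℝ E] [CompleteSpace E] {g : ℝ → E} {t₀ t : ℝ}
    (hg : ContinuousOn g (Ici t₀)) (ht : t₀ < t) :
    HasDerivAt (fun u => ∫ s in t₀..u, g s) (g t) t := by
  have hgt : ContinuousAt g t := hg.continuousAt (Ici_mem_nhds ht)
  refine intervalIntegral.integral_hasDerivAt_right ?_ ?_ hgt
  · exact (hg.mono (by simp [uIcc_of_le ht.le, Icc_subset_Ici_self])).intervalIntegrable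
  · exact (hg.mono Ioi_subset_Ici_self).stronglyMeasurableAtFilter isOpen_Ioi t ht

theorem rpow_two_mul {s : ℝ} (hs : 0 ≤ s) (p : ℝ) : s ^ (2 * p) = (s ^ p) ^ 2 := by
  rw [mul_comm, ← Nat.cast_ofNat, rpow_mul_natCast hs]

theorem sq_lt_rpow_two_mul {a p s : ℝ} (ha : 0 ≤ a) (hp : 0 < p) (hs : a ^ (1 / p) < s) :
    a ^ 2 < s ^ (2 * p) := by
  have hs₀ : 0 < s := (rpow_nonneg ha _).trans_lt hs
  rw [one_div, rpow_inv_lt_iff_of_pos ha hs₀.le hp] at hs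
  rw [rpow_two_mul hs₀.le]
  gcongr

theorem continuousOn_catenoid_slope {a p : ℝ} (ha : 0 ≤ a) (hp : 0 < p) :
    ContinuousOn (fun s => a * (s ^ (2 * p) - a ^ 2) ^ (-(1 : ℝ) / 2)) (Ioi (a ^ (1 / p))) := by
  intro s hs
  have hs₀ : 0 < s := (rpow_nonneg ha _).trans_lt hs
  have hpos : 0 < s ^ (2 * p) - a ^ 2 := sub_pos.mpr (sq_lt_rpow_two_mul ha hp hs)
  have hbase : ContinuousAt (fun x : ℝ => x ^ (2 * p) - a ^ 2) s :=
    (continuousAt_rpow_const s _ (Or.inl hs₀.ne')).sub continuousAt_const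
  exact (continuousAt_const.mul (hbase.rpow_const (Or.inl hpos.ne'))).continuousWithinAt

theorem flux_catenoid_slope {a T : ℝ} (hT : 0 < T) (h : a ^ 2 < T ^ 2) :
    T * (-(a * (T ^ 2 - a ^ 2) ^ (-(1 : ℝ) / 2)))
      / √(1 + (-(a * (T ^ 2 - a ^ 2) ^ (-(1 : ℝ) / 2))) ^ 2) = -a := by
  set u := T ^ 2 - a ^ 2 with hu_def
  have hu : 0 < u := sub_pos.mpr h
  have hsu : 0 < √u := sqrt_pos.mpr hu
  have hpow : u ^ (-(1 : ℝ) / 2) = (√u)⁻¹ := by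
    rw [neg_div, rpow_neg hu.le, sqrt_eq_rpow]
  have hsq : 1 + (-(a * (√u)⁻¹)) ^ 2 = T ^ 2 / u := by
    rw [neg_sq, mul_pow, inv_pow, sq_sqrt hu.le]
    field_simp
    rw [hu_def]
    ring
  rw [hpow, hsq, sqrt_div (sq_nonneg T), sqrt_sq hT.le]
  field_simp

/-- **Catenoid-type solutions** of the flat radial minimal surface equation (Lemma 6.8): for
`f(t) = C - ∫_{t₀}^t a (s^(2n-4) - a²)^(-1/2) ds`, the function `f` is differentiable on
`(t₀, ∞)` and the flux quantity `t^(n-2) f'(t)/√(1 + f'(t)²)` equals the constant `-a`. -/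
theorem catenoid_flux (n : ℕ) (hn : 3 ≤ n) (a t₀ C : ℝ) (ha : 0 < a)
    (ht₀ : a ^ ((1 : ℝ) / ((n : ℝ) - 2)) < t₀) :
    let f : ℝ → ℝ :=
      fun t => C - ∫ s in t₀..t, a * (s ^ (2 * (n : ℝ) - 4) - a ^ 2) ^ (-(1 : ℝ) / 2)
    ∀ t : ℝ, t₀ < t →
      DifferentiableAt ℝ f t ∧
      t ^ ((n : ℝ) - 2) * deriv f t / Real.sqrt (1 + deriv f t ^ 2) = -a := by
  intro f t ht
  have hp : (0 : ℝ) < n - 2 := by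
    have : (3 : ℝ) ≤ n := by exact_mod_cast hn
    linarith
  have hexp : 2 * (n : ℝ) - 4 = 2 * ((n : ℝ) - 2) := by ring
  have hslope := continuousOn_catenoid_slope ha.le hp
  have hf : HasDerivAt f (-(a * (t ^ (2 * ((n : ℝ) - 2)) - a ^ 2) ^ (-(1 : ℝ) / 2))) t := by
    simp only [f, hexp]
    refine (hasDerivAt_const t C).sub ?_ |>.congr_deriv (zero_sub _)
    exact hasDerivAt_integral_of_continuousOn_Ici (hslope.mono (Ici_subset_Ioi.mpr ht₀)) ht
  have ht_pos : 0 < t := (rpow_nonneg ha.le _).trans_lt (ht₀.trans ht)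
  refine ⟨hf.differentiableAt, ?_⟩
  rw [hf.deriv, rpow_two_mul ht_pos.le]
  refine flux_catenoid_slope (rpow_pos_of_pos ht_pos _) ?_
  rw [← rpow_two_mul ht_pos.le]
  exact sq_lt_rpow_two_mul ha.le hp (ht₀.trans ht)
end

section
/- Let n ≥ 3 be an integer and define φ : ℝⁿ → ℝ by φ(x) = 1 + (1 + (|x|²)^{n−2})^{−1/2}. Then φ is smooth on ℝⁿ and its Laplacian satisfies Δφ(x) = −3(n−2)²·(|x|²)^{n−3}·(1 + (|x|²)^{n−2})^{−5/2} for every x ∈ ℝⁿ (where (|x|²)^{n−3} is interpreted as 1 when n = 3). In particular Δφ(x) ≤ 0 for all x, that is, φ is superharmonic on ℝⁿ. -/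
/-!
`φ` is radial: `φ x = g ‖x‖²` with `g t = 1 + (1 + t ^ m) ^ (-1/2)`, `m = n - 2`, and for such a
function the Laplacian on `ℝⁿ` is `4 t g''(t) + 2 n g'(t)` at `t = ‖x‖²`. Writing
`(1 + t ^ m) ^ (-3/2) = (1 + t ^ m) (1 + t ^ m) ^ (-5/2)`, the choice `n = m + 2` makes the terms
combine to `-3 m² t ^ (m - 1) (1 + t ^ m - t ^ m) (1 + t ^ m) ^ (-5/2)`, which is `≤ 0`.
-/

open MeasureTheory Set Real

section RadialLaplacian

variable {n : ℕ} {g g' g'' : ℝ → ℝ}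

theorem hasFDerivAt_comp_norm_sq (hg : ∀ t, 0 ≤ t → HasDerivAt g (g' t) t)
    (x : EuclideanSpace ℝ (Fin n)) :
    HasFDerivAt (fun y => g (‖y‖ ^ 2)) (g' (‖x‖ ^ 2) • 2 • innerSL ℝ x) x :=
  (hg _ (sq_nonneg _)).comp_hasFDerivAt x (hasStrictFDerivAt_norm_sq x).hasFDerivAt

theorem fderiv_comp_norm_sq_single (hg : ∀ t, 0 ≤ t → HasDerivAt g (g' t) t)
    (x : EuclideanSpace ℝ (Fin n)) (i : Fin n) :
    fderiv ℝ (fun y => g (‖y‖ ^ 2)) x (EuclideanSpace.single i 1) = 2 * g' (‖x‖ ^ 2) * x i := by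
  simp only [(hasFDerivAt_comp_norm_sq hg x).fderiv, smul_apply,
    coe_innerSL_apply, EuclideanSpace.inner_single_right, RCLike.conj_to_real, smul_eq_mul]
  ring

theorem laplacian_comp_norm_sq (hg : ∀ t, 0 ≤ t → HasDerivAt g (g' t) t)
    (hg' : ∀ t, 0 ≤ t → HasDerivAt g' (g'' t) t) (x : EuclideanSpace ℝ (Fin n)) :
    laplacian (fun y => g (‖y‖ ^ 2)) x = 4 * ‖x‖ ^ 2 * g'' (‖x‖ ^ 2) + 2 * n * g' (‖x‖ ^ 2) := by
  have hterm (i : Fin n) :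
      fderiv ℝ (fun y => fderiv ℝ (fun y => g (‖y‖ ^ 2)) y (EuclideanSpace.single i 1)) x
        (EuclideanSpace.single i 1) = 4 * g'' (‖x‖ ^ 2) * x i ^ 2 + 2 * g' (‖x‖ ^ 2) := by
    simp_rw [fderiv_comp_norm_sq_single hg]
    have hcoord := (EuclideanSpace.proj (𝕜 := ℝ) (ι := Fin n) i).hasFDerivAt (x := x)
    rw [HasFDerivAt.fderiv (f := fun y : EuclideanSpace ℝ (Fin n) => 2 * g' (‖y‖ ^ 2) * y i)
      (((hasFDerivAt_comp_norm_sq hg' x).const_mul 2).mul hcoord)]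
    simp only [add_apply, smul_apply, PiLp.proj_apply,
      PiLp.single_eq_same, coe_innerSL_apply, EuclideanSpace.inner_single_right,
      RCLike.conj_to_real, smul_eq_mul]
    ring
  simp only [laplacian, hterm, Finset.sum_add_distrib, ← Finset.mul_sum,
    ← EuclideanSpace.real_norm_sq_eq, Finset.sum_const, Finset.card_univ, Fintype.card_fin,
    nsmul_eq_mul]
  ring

end RadialLaplacian

theorem hasDerivAt_one_add_pow_rpow (m : ℕ) (p : ℝ) {t : ℝ} (ht : 0 ≤ t) :
    HasDerivAt (fun s => (1 + s ^ m) ^ p) (p * m * t ^ (m - 1) * (1 + t ^ m) ^ (p - 1)) t := by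
  convert ((hasDerivAt_pow m t).const_add 1).rpow_const (p := p) (Or.inl (by positivity)) using 1
  ring

/-- `φ x = conformalProfile (n - 3) ‖x‖²`; the shift by 3 keeps all exponents free of
truncated subtraction. -/
noncomputable def conformalProfile (k : ℕ) (t : ℝ) : ℝ := 1 + (1 + t ^ (k + 1)) ^ (-(1 : ℝ) / 2)

noncomputable def conformalProfileDeriv (k : ℕ) (t : ℝ) : ℝ :=
  -((k + 1 : ℝ) / 2) * (t ^ k * (1 + t ^ (k + 1)) ^ (-(3 : ℝ) / 2))

noncomputable def conformalProfileDeriv2 (k : ℕ) (t : ℝ) : ℝ :=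
  -((k + 1 : ℝ) / 2) * (k * t ^ (k - 1) * (1 + t ^ (k + 1)) ^ (-(3 : ℝ) / 2)
    + t ^ k * (-(3 : ℝ) / 2 * (k + 1) * t ^ k * (1 + t ^ (k + 1)) ^ (-(5 : ℝ) / 2)))

theorem hasDerivAt_conformalProfile (k : ℕ) {t : ℝ} (ht : 0 ≤ t) :
    HasDerivAt (conformalProfile k) (conformalProfileDeriv k t) t := by
  refine ((hasDerivAt_one_add_pow_rpow (k + 1) (-(1 : ℝ) / 2) ht).const_add 1).congr_deriv ?_
  rw [conformalProfileDeriv, show -(1 : ℝ) / 2 - 1 = -(3 : ℝ) / 2 by norm_num]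
  push_cast
  ring_nf

theorem hasDerivAt_conformalProfileDeriv (k : ℕ) {t : ℝ} (ht : 0 ≤ t) :
    HasDerivAt (conformalProfileDeriv k) (conformalProfileDeriv2 k t) t := by
  have hprod := (hasDerivAt_pow k t).mul (hasDerivAt_one_add_pow_rpow (k + 1) (-(3 : ℝ) / 2) ht)
  refine (hprod.const_mul (-((k + 1 : ℝ) / 2))).congr_deriv ?_
  rw [conformalProfileDeriv2, show -(3 : ℝ) / 2 - 1 = -(5 : ℝ) / 2 by norm_num]
  push_cast
  ring_nf

theorem radialLaplacian_conformalProfile_eq (k : ℕ) {t : ℝ} (ht : 0 ≤ t) :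
    4 * t * conformalProfileDeriv2 k t + 2 * (k + 3 : ℝ) * conformalProfileDeriv k t
      = -(3 * (k + 1 : ℝ) ^ 2) * t ^ k * (1 + t ^ (k + 1)) ^ (-(5 : ℝ) / 2) := by
  have hA : 0 < 1 + t ^ (k + 1) := by positivity
  have hsplit : (1 + t ^ (k + 1)) ^ (-(3 : ℝ) / 2)
      = (1 + t ^ (k + 1)) * (1 + t ^ (k + 1)) ^ (-(5 : ℝ) / 2) := by
    rw [← Real.rpow_one_add' hA.le (by norm_num)]; norm_num
  have hpow : t * (k * t ^ (k - 1)) = k * t ^ k := by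
    cases k with
    | zero => simp
    | succ k => rw [Nat.add_sub_cancel, pow_succ]; ring
  rw [conformalProfileDeriv2, conformalProfileDeriv, hsplit]
  linear_combination
    (-(2 : ℝ) * (k + 1) * (1 + t ^ (k + 1)) * (1 + t ^ (k + 1)) ^ (-(5 : ℝ) / 2)) * hpow

/-- The conformal factor `φ(x) = 1 + (1 + (|x|²)^(n-2))^(-1/2)` of Lemma 7.1 ('localization') is
smooth, its Laplacian is `Δφ(x) = -3(n-2)² (|x|²)^(n-3) (1 + (|x|²)^(n-2))^(-5/2)`, and in
particular `φ` is superharmonic on `ℝⁿ`. -/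
theorem schwarzschild_like_superharmonic (n : ℕ) (hn : 3 ≤ n) :
    let φ : EuclideanSpace ℝ (Fin n) → ℝ :=
      fun x => 1 + (1 + (‖x‖ ^ 2) ^ (n - 2)) ^ (-(1 : ℝ) / 2)
    ContDiff ℝ (⊤ : ℕ∞) φ ∧
    (∀ x : EuclideanSpace ℝ (Fin n),
      laplacian φ x
        = -(3 * ((n : ℝ) - 2) ^ 2) * (‖x‖ ^ 2) ^ (n - 3)
            * (1 + (‖x‖ ^ 2) ^ (n - 2)) ^ (-(5 : ℝ) / 2)) ∧
    (∀ x : EuclideanSpace ℝ (Fin n), laplacian φ x ≤ 0) := by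
  intro φ
  obtain ⟨k, rfl⟩ := Nat.exists_eq_add_of_le' hn
  have hφ : φ = fun x => conformalProfile k (‖x‖ ^ 2) := rfl
  have hsmooth : ContDiff ℝ (⊤ : ℕ∞) φ :=
    contDiff_const.add <| (contDiff_const.add ((contDiff_norm_sq ℝ).pow _)).rpow_const_of_ne
      fun x => by positivity
  have hlap (x : EuclideanSpace ℝ (Fin (k + 3))) : laplacian φ x
      = -(3 * (k + 1 : ℝ) ^ 2) * (‖x‖ ^ 2) ^ k * (1 + (‖x‖ ^ 2) ^ (k + 1)) ^ (-(5 : ℝ) / 2) := by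
    rw [hφ, laplacian_comp_norm_sq (fun t ht => hasDerivAt_conformalProfile k ht)
      (fun t ht => hasDerivAt_conformalProfileDeriv k ht), ← radialLaplacian_conformalProfile_eq k
      (sq_nonneg _)]
    push_cast
    ring
  refine ⟨hsmooth, fun x => ?_, fun x => ?_⟩
  · rw [hlap, show k + 3 - 3 = k from rfl, show k + 3 - 2 = k + 1 from rfl]
    push_cast
    ring
  · rw [hlap, neg_mul, neg_mul, neg_nonpos]
    positivity
end

section
/- Let n ≥ 2 be an integer, let c ≥ 1, β > 0, and s > 0. Let μ be a Borel measure on ℝⁿ and v : ℝⁿ → ℝ a measurable function such that μ({x : |x| ≤ r}) ≤ c·r^{n−1} for every r ≥ s and ∫_{{x : |x| ≥ ρ}} |x|^{−1−n}·v(x)² dμ(x) ≤ c·ρ^{−β} for every ρ ≥ s. Then there is a constant C > 0, depending only on n, c, and β, such that ∫_{{x : |x| ≥ s}} |x|^{−n}·|v(x)| dμ(x) ≤ C·s^{−β/2}. -/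
/-!
Cut `{|x| ≥ s}` into the dyadic annuli `ρ ≤ |x| < 2ρ`, `ρ = 2ᵏ s`. On each annulus the weighted
AM–GM inequality `|x|⁻ⁿ |v| ≤ (t/2) |x|¹⁻ⁿ + (1/2t) |x|⁻¹⁻ⁿ v²` with `t = ρ^(-β/2)` bounds the
first term by the area growth and the second by the square decay, both by `O(ρ^(-β/2))`.
These bounds decay geometrically in `k`, so they sum to `O(s^(-β/2))`.
-/

open MeasureTheory Set

lemma mul_mul_abs_le_half_mul_add {P t : ℝ} (hP : 0 ≤ P) (ht : 0 < t) (u w : ℝ) :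
    P * u * |w| ≤ t / 2 * P + 1 / (2 * t) * (P * u ^ 2 * w ^ 2) := by
  have hsq : 0 ≤ P / (2 * t) * (t - u * |w|) ^ 2 := by positivity
  have hexp : P / (2 * t) * (t - u * |w|) ^ 2
      = t / 2 * P + 1 / (2 * t) * (P * u ^ 2 * w ^ 2) - P * u * |w| := by
    field_simp
    rw [← sq_abs w]
    ring
  linarith

lemma rpow_neg_mul_abs_le {x t : ℝ} (hx : 0 < x) (ht : 0 < t) (a w : ℝ) :
    x ^ (-a) * |w| ≤ t / 2 * x ^ (1 - a) + 1 / (2 * t) * (x ^ (-1 - a) * w ^ 2) := by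
  have h₁ : x ^ (-a) = x ^ (1 - a) * x⁻¹ := by
    rw [← Real.rpow_neg_one, ← Real.rpow_add hx]; ring_nf
  have h₂ : x ^ (-1 - a) = x ^ (1 - a) * x⁻¹ ^ 2 := by
    rw [← Real.rpow_neg_one, ← Real.rpow_natCast, ← Real.rpow_mul hx.le, ← Real.rpow_add hx]
    ring_nf
  rw [h₁, h₂]
  exact mul_mul_abs_le_half_mul_add (by positivity) ht _ _

lemma exists_two_pow_mul_le_lt {s y : ℝ} (hs : 0 < s) (hy : s ≤ y) :
    ∃ k : ℕ, 2 ^ k * s ≤ y ∧ y < 2 * (2 ^ k * s) := by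
  obtain ⟨k, hk₁, hk₂⟩ := exists_nat_pow_near ((one_le_div hs).2 hy) one_lt_two
  refine ⟨k, (le_div_iff₀ hs).1 hk₁, ?_⟩
  rw [div_lt_iff₀ hs, pow_succ] at hk₂
  linarith

section Annulus

variable {E : Type*} [NormedAddCommGroup E]

def dyadicAnnulus (ρ : ℝ) : Set E := {x | ρ ≤ ‖x‖ ∧ ‖x‖ < 2 * ρ}

lemma setOf_le_norm_subset_iUnion_dyadicAnnulus {s : ℝ} (hs : 0 < s) :
    {x : E | s ≤ ‖x‖} ⊆ ⋃ k : ℕ, dyadicAnnulus (2 ^ k * s) :=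
  fun _ hx ↦ mem_iUnion.2 (exists_two_pow_mul_le_lt hs hx)

variable [MeasurableSpace E] [OpensMeasurableSpace E] {μ : Measure E} {v : E → ℝ} {a c β : ℝ}

lemma measurableSet_dyadicAnnulus (ρ : ℝ) : MeasurableSet (dyadicAnnulus ρ : Set E) :=
  (measurableSet_le measurable_const measurable_norm).inter
    (measurableSet_lt measurable_norm measurable_const)

lemma setLIntegral_dyadicAnnulus_rpow_le {ρ : ℝ} (ha : 1 ≤ a) (hρ : 0 < ρ) :
    ∫⁻ x in dyadicAnnulus ρ, ENNReal.ofReal (‖x‖ ^ (1 - a)) ∂μ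
      ≤ ENNReal.ofReal (ρ ^ (1 - a)) * μ {x | ‖x‖ ≤ 2 * ρ} :=
  calc _ ≤ ∫⁻ _ in dyadicAnnulus ρ, ENNReal.ofReal (ρ ^ (1 - a)) ∂μ :=
        setLIntegral_mono' (measurableSet_dyadicAnnulus ρ) fun _ hx ↦
          ENNReal.ofReal_le_ofReal (Real.rpow_le_rpow_of_nonpos hρ hx.1 (by linarith))
    _ = ENNReal.ofReal (ρ ^ (1 - a)) * μ (dyadicAnnulus ρ) := setLIntegral_const _ _
    _ ≤ _ := by gcongr; exact fun _ hx ↦ hx.2.le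

theorem setLIntegral_dyadicAnnulus_rpow_neg_mul_abs_le {ρ : ℝ} (ha : 1 ≤ a) (hc : 0 ≤ c)
    (hρ : 0 < ρ) (hμ : μ {x | ‖x‖ ≤ 2 * ρ} ≤ ENNReal.ofReal (c * (2 * ρ) ^ (a - 1)))
    (hv : ∫⁻ x in {x | ρ ≤ ‖x‖}, ENNReal.ofReal (‖x‖ ^ (-1 - a) * v x ^ 2) ∂μ
      ≤ ENNReal.ofReal (c * ρ ^ (-β))) :
    ∫⁻ x in dyadicAnnulus ρ, ENNReal.ofReal (‖x‖ ^ (-a) * |v x|) ∂μ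
      ≤ ENNReal.ofReal (c / 2 * (2 ^ (a - 1) + 1) * ρ ^ (-β / 2)) := by
  set t := ρ ^ (-β / 2)
  have ht : 0 < t := by positivity
  have hpt : ∀ x ∈ dyadicAnnulus ρ, ENNReal.ofReal (‖x‖ ^ (-a) * |v x|)
      ≤ ENNReal.ofReal (t / 2) * ENNReal.ofReal (‖x‖ ^ (1 - a))
        + ENNReal.ofReal (1 / (2 * t)) * ENNReal.ofReal (‖x‖ ^ (-1 - a) * v x ^ 2) := by
    intro x hx
    rw [← ENNReal.ofReal_mul (by positivity), ← ENNReal.ofReal_mul (by positivity)]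
    exact (ENNReal.ofReal_le_ofReal
      (rpow_neg_mul_abs_le (hρ.trans_le hx.1) ht a (v x))).trans ENNReal.ofReal_add_le
  have hρβ : ρ ^ (-β) = t ^ 2 := by
    rw [← Real.rpow_natCast, ← Real.rpow_mul hρ.le]; ring_nf
  have hρa : ρ ^ (1 - a) * ρ ^ (a - 1) = 1 := by
    rw [← Real.rpow_add hρ]; simp
  calc _ ≤ ∫⁻ x in dyadicAnnulus ρ, ENNReal.ofReal (t / 2) * ENNReal.ofReal (‖x‖ ^ (1 - a))
          + ENNReal.ofReal (1 / (2 * t)) * ENNReal.ofReal (‖x‖ ^ (-1 - a) * v x ^ 2) ∂μ :=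
        setLIntegral_mono' (measurableSet_dyadicAnnulus ρ) hpt
    _ = ENNReal.ofReal (t / 2) * ∫⁻ x in dyadicAnnulus ρ, ENNReal.ofReal (‖x‖ ^ (1 - a)) ∂μ
          + ENNReal.ofReal (1 / (2 * t))
            * ∫⁻ x in dyadicAnnulus ρ, ENNReal.ofReal (‖x‖ ^ (-1 - a) * v x ^ 2) ∂μ := by
        rw [lintegral_add_left (by fun_prop), lintegral_const_mul' _ _ ENNReal.ofReal_ne_top,
          lintegral_const_mul' _ _ ENNReal.ofReal_ne_top]
    _ ≤ ENNReal.ofReal (t / 2) * (ENNReal.ofReal (ρ ^ (1 - a))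
            * ENNReal.ofReal (c * (2 * ρ) ^ (a - 1)))
          + ENNReal.ofReal (1 / (2 * t)) * ENNReal.ofReal (c * ρ ^ (-β)) := by
        gcongr
        · exact (setLIntegral_dyadicAnnulus_rpow_le ha hρ).trans (mul_le_mul_right hμ _)
        · exact (lintegral_mono_set fun _ hx ↦ hx.1).trans hv
    _ = ENNReal.ofReal (c / 2 * (2 ^ (a - 1) + 1) * t) := by
        rw [← ENNReal.ofReal_mul (by positivity), ← ENNReal.ofReal_mul (by positivity),
          ← ENNReal.ofReal_mul (by positivity),
          ← ENNReal.ofReal_add (by positivity) (by positivity)]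
        congr 1
        rw [Real.mul_rpow zero_le_two hρ.le, hρβ]
        field_simp
        linear_combination c * 2 ^ (a - 1) * hρa

theorem setLIntegral_rpow_neg_mul_abs_le_of_growth_of_decay {s : ℝ} (ha : 1 ≤ a) (hc : 0 ≤ c)
    (hβ : 0 < β) (hs : 0 < s)
    (hμ : ∀ r, s ≤ r → μ {x | ‖x‖ ≤ r} ≤ ENNReal.ofReal (c * r ^ (a - 1)))
    (hv : ∀ ρ, s ≤ ρ → ∫⁻ x in {x | ρ ≤ ‖x‖}, ENNReal.ofReal (‖x‖ ^ (-1 - a) * v x ^ 2) ∂μ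
      ≤ ENNReal.ofReal (c * ρ ^ (-β))) :
    ∫⁻ x in {x : E | s ≤ ‖x‖}, ENNReal.ofReal (‖x‖ ^ (-a) * |v x|) ∂μ
      ≤ ENNReal.ofReal (c / 2 * (2 ^ (a - 1) + 1) / (1 - 2 ^ (-β / 2)) * s ^ (-β / 2)) := by
  have hq : (2 : ℝ) ^ (-β / 2) < 1 := Real.rpow_lt_one_of_one_lt_of_neg one_lt_two (by linarith)
  have hannulus (k : ℕ) :
      ∫⁻ x in dyadicAnnulus (2 ^ k * s), ENNReal.ofReal (‖x‖ ^ (-a) * |v x|) ∂μ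
        ≤ ENNReal.ofReal (c / 2 * (2 ^ (a - 1) + 1) * s ^ (-β / 2) * (2 ^ (-β / 2)) ^ k) := by
    have hsρ : s ≤ 2 ^ k * s := le_mul_of_one_le_left hs.le (one_le_pow₀ one_le_two)
    refine (setLIntegral_dyadicAnnulus_rpow_neg_mul_abs_le ha hc (by positivity)
      (hμ _ (by linarith)) (hv _ hsρ)).trans_eq ?_
    rw [Real.mul_rpow (by positivity) hs.le, ← Real.rpow_natCast, ← Real.rpow_mul zero_le_two,
      mul_comm (k : ℝ), Real.rpow_mul zero_le_two, Real.rpow_natCast]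
    congr 1
    ring
  calc _ ≤ ∫⁻ x in ⋃ k : ℕ, dyadicAnnulus (2 ^ k * s), ENNReal.ofReal (‖x‖ ^ (-a) * |v x|) ∂μ :=
        lintegral_mono_set (setOf_le_norm_subset_iUnion_dyadicAnnulus hs)
    _ ≤ ∑' k : ℕ, ∫⁻ x in dyadicAnnulus (2 ^ k * s), ENNReal.ofReal (‖x‖ ^ (-a) * |v x|) ∂μ :=
        lintegral_iUnion_le _ _
    _ ≤ ∑' k : ℕ,
          ENNReal.ofReal (c / 2 * (2 ^ (a - 1) + 1) * s ^ (-β / 2) * (2 ^ (-β / 2)) ^ k) :=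
        ENNReal.tsum_le_tsum hannulus
    _ = ENNReal.ofReal
          (∑' k : ℕ, c / 2 * (2 ^ (a - 1) + 1) * s ^ (-β / 2) * (2 ^ (-β / 2)) ^ k) :=
        (ENNReal.ofReal_tsum_of_nonneg (fun _ ↦ by positivity)
          ((summable_geometric_of_lt_one (by positivity) hq).mul_left _)).symm
    _ = _ := by
        rw [tsum_mul_left, tsum_geometric_of_lt_one (by positivity) hq]
        ring_nf

end Annulus

/-- **Dyadic Cauchy–Schwarz estimate** (measure-theoretic form of Lemma 2.9). If a Borel measure
`μ` on `ℝⁿ` has the growth `μ {|x| ≤ r} ≤ c r^(n-1)` for `r ≥ s` and the weighted square-decay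
`∫_{|x| ≥ ρ} |x|^(-1-n) v² dμ ≤ c ρ^(-β)` for `ρ ≥ s`, then
`∫_{|x| ≥ s} |x|^(-n) |v| dμ ≤ C s^(-β/2)` with `C` depending only on `n`, `c`, `β`. -/
theorem dyadic_cauchy_schwarz (n : ℕ) (hn : 2 ≤ n) (c β : ℝ) (hc : 1 ≤ c) (hβ : 0 < β) :
    ∃ C > (0 : ℝ), ∀ s : ℝ, 0 < s →
      ∀ (μ : Measure (EuclideanSpace ℝ (Fin n))) (v : EuclideanSpace ℝ (Fin n) → ℝ),
        Measurable v →
        (∀ r : ℝ, s ≤ r →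
          μ {x : EuclideanSpace ℝ (Fin n) | ‖x‖ ≤ r} ≤ ENNReal.ofReal (c * r ^ ((n : ℝ) - 1))) →
        (∀ ρ : ℝ, s ≤ ρ →
          ∫⁻ x in {x : EuclideanSpace ℝ (Fin n) | ρ ≤ ‖x‖},
              ENNReal.ofReal (‖x‖ ^ (-1 - (n : ℝ)) * v x ^ 2) ∂μ
            ≤ ENNReal.ofReal (c * ρ ^ (-β))) →
        ∫⁻ x in {x : EuclideanSpace ℝ (Fin n) | s ≤ ‖x‖},
            ENNReal.ofReal (‖x‖ ^ (-(n : ℝ)) * |v x|) ∂μ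
          ≤ ENNReal.ofReal (C * s ^ (-β / 2)) := by
  have hq : (2 : ℝ) ^ (-β / 2) < 1 := Real.rpow_lt_one_of_one_lt_of_neg one_lt_two (by linarith)
  have hn₁ : (1 : ℝ) ≤ n := by exact_mod_cast one_le_two.trans hn
  refine ⟨c / 2 * (2 ^ ((n : ℝ) - 1) + 1) / (1 - 2 ^ (-β / 2)),
    div_pos (by positivity) (sub_pos.2 hq), ?_⟩
  intro s hs μ v _ hμ hv
  exact setLIntegral_rpow_neg_mul_abs_le_of_growth_of_decay hn₁ (by linarith) hβ hs hμ hv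
end

section
/- Let n ≥ 4 be an integer, let τ > 1 and c ≥ 1. Then there exist t₀ > 0 and c₀ > 0, depending only on n, τ, and c, with the following property. For every r > t₀, every z ∈ ℝ, and every continuously differentiable f : (0, r] → ℝ with f(r) = z and f′(t) ≤ 0 for all t ∈ (0, r), such that the function ψ(t) = t^{n−2}·f′(t)/√(1 + f′(t)²) is differentiable on (0, r) with ψ′(t) ≥ −c·t^{n−2}·(1 + (t² + f(t)²)^{(τ+1)/2})^{−1} for all t ∈ (0, r) and ψ(t) → 0 as t → 0⁺, one has z ≤ f(t) ≤ c₀ + z for every t ∈ (t₀, r]. -/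
/-!
Absorbing the weight `(1 + (t² + f²)^((τ+1)/2))⁻¹ ≤ t^(-(μ+1))` for some `1 < μ < min τ 2`,
the hypothesis on `ψ'` says that `ψ(t) + K t^a` is nondecreasing, where `a = n - 2 - μ > 0` and
`K = c / a`. Since it tends to `0` at `0⁺`, the flux satisfies `ψ(t) ≥ -K t^a`, i.e.
`f'/√(1 + f'²) ≥ -K t^(-μ)`. Once `K t^(-μ) ≤ 1/2` this forces `f' ≥ -2K t^(-μ)`, which is
integrable at infinity because `μ > 1`; integrating from `t` to `r` gives the height bound.
-/

open Set Real Filter Topology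

lemma rpow_add_one_le_one_add_rpow {x y μ τ : ℝ} (hx : 0 < x) (hμ : 0 ≤ μ) (hμτ : μ ≤ τ) :
    x ^ (μ + 1) ≤ 1 + (x ^ 2 + y ^ 2) ^ ((τ + 1) / 2) := by
  have hsq : x ^ (τ + 1) ≤ (x ^ 2 + y ^ 2) ^ ((τ + 1) / 2) := by
    calc x ^ (τ + 1) = (x ^ 2) ^ ((τ + 1) / 2) := by
          rw [← rpow_two, ← rpow_mul hx.le]; ring_nf
      _ ≤ (x ^ 2 + y ^ 2) ^ ((τ + 1) / 2) := by gcongr <;> linarith [sq_nonneg y]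
  have hnonneg : 0 ≤ (x ^ 2 + y ^ 2) ^ ((τ + 1) / 2) := by positivity
  rcases le_total x 1 with hx1 | hx1
  · linarith [rpow_le_one hx.le hx1 (by linarith : 0 ≤ μ + 1)]
  · linarith [rpow_le_rpow_of_exponent_le hx1 (by linarith : μ + 1 ≤ τ + 1)]

lemma rpow_mul_inv_one_add_rpow_le {x y p μ τ : ℝ} (hx : 0 < x) (hμ : 0 ≤ μ) (hμτ : μ ≤ τ) :
    x ^ p * (1 + (x ^ 2 + y ^ 2) ^ ((τ + 1) / 2))⁻¹ ≤ x ^ (p - 1 - μ) := by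
  rw [mul_inv_le_iff₀ (by positivity)]
  calc x ^ p = x ^ (p - 1 - μ) * x ^ (μ + 1) := by rw [← rpow_add hx]; ring_nf
    _ ≤ x ^ (p - 1 - μ) * (1 + (x ^ 2 + y ^ 2) ^ ((τ + 1) / 2)) := by
      gcongr; exact rpow_add_one_le_one_add_rpow hx hμ hμτ

/-- The comparison `ψ + (c / a) x^a` is nondecreasing and vanishes at `0⁺`. -/
lemma neg_div_mul_rpow_le_of_hasDerivAt {ψ ψ' : ℝ → ℝ} {r a c s : ℝ} (ha : 0 < a)
    (hψ : ∀ x ∈ Ioo 0 r, HasDerivAt ψ (ψ' x) x)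
    (hψ' : ∀ x ∈ Ioo 0 r, -(c * x ^ (a - 1)) ≤ ψ' x)
    (hlim : Tendsto ψ (𝓝[>] 0) (𝓝 0)) (hs : s ∈ Ioo 0 r) :
    -(c / a * s ^ a) ≤ ψ s := by
  set g : ℝ → ℝ := fun x => ψ x + c / a * x ^ a
  have hg : ∀ x ∈ Ioo 0 r, HasDerivAt g (ψ' x + c * x ^ (a - 1)) x := fun x hx => by
    have hpow := (hasDerivAt_rpow_const (p := a) (.inl hx.1.ne')).const_mul (c / a)
    refine ((hψ x hx).add hpow).congr_deriv ?_
    rw [← mul_assoc, div_mul_cancel₀ c ha.ne']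
  have hmono : MonotoneOn g (Ioo 0 r) :=
    monotoneOn_of_hasDerivWithinAt_nonneg (convex_Ioo 0 r)
      (fun x hx => (hg x hx).continuousAt.continuousWithinAt)
      (fun x hx => (hg x (interior_subset hx)).hasDerivWithinAt)
      (fun x hx => by linarith [hψ' x (interior_subset hx)])
  have hglim : Tendsto g (𝓝[>] 0) (𝓝 0) := by
    have hpow : Tendsto (fun x : ℝ => x ^ a) (𝓝[>] 0) (𝓝 0) := by
      simpa [zero_rpow ha.ne'] using
        (continuousAt_rpow_const 0 a (.inr ha.le)).tendsto.mono_left nhdsWithin_le_nhds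
    simpa using hlim.add (hpow.const_mul (c / a))
  have hgs : 0 ≤ g s := by
    refine le_of_tendsto hglim ?_
    filter_upwards [Ioo_mem_nhdsGT hs.1] with x hx
    exact hmono ⟨hx.1, hx.2.trans hs.2⟩ hs hx.2.le
  simp only [g] at hgs
  linarith

noncomputable def flux (p : ℝ) (g : ℝ → ℝ) (u : ℝ) : ℝ := u ^ p * g u / √(1 + g u ^ 2)

lemma neg_div_mul_rpow_le_flux {f g ψ' : ℝ → ℝ} {p μ τ c r s : ℝ} (hpμ : 0 < p - μ) (hμ : 0 ≤ μ)
    (hμτ : μ ≤ τ) (hc : 0 ≤ c) (hψ : ∀ x ∈ Ioo 0 r, HasDerivAt (flux p g) (ψ' x) x)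
    (hψ' : ∀ x ∈ Ioo 0 r, -(c * x ^ p * (1 + (x ^ 2 + f x ^ 2) ^ ((τ + 1) / 2))⁻¹) ≤ ψ' x)
    (hlim : Tendsto (flux p g) (𝓝[>] 0) (𝓝 0)) (hs : s ∈ Ioo 0 r) :
    -(c / (p - μ) * s ^ (p - μ)) ≤ flux p g s := by
  refine neg_div_mul_rpow_le_of_hasDerivAt hpμ hψ (fun x hx => (neg_le_neg ?_).trans (hψ' x hx))
    hlim hs
  rw [mul_assoc, show p - μ - 1 = p - 1 - μ by ring]
  exact mul_le_mul_of_nonneg_left (rpow_mul_inv_one_add_rpow_le hx.1 hμ hμτ) hc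

lemma neg_two_mul_le_of_neg_le_div_sqrt_s13 {m q : ℝ} (hm : 0 ≤ m) (hm2 : m ≤ 1 / 2)
    (h : -m ≤ q / √(1 + q ^ 2)) : -(2 * m) ≤ q := by
  rcases le_total 0 q with hq | hq
  · linarith
  have hS : 0 < √(1 + q ^ 2) := sqrt_pos.2 (by positivity)
  have hS2 : √(1 + q ^ 2) ^ 2 = 1 + q ^ 2 := sq_sqrt (by positivity)
  rw [le_div_iff₀ hS] at h
  have hq2 : q ^ 2 ≤ m ^ 2 * (1 + q ^ 2) := by
    rw [← hS2]; nlinarith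
  have hm_sq : m ^ 2 ≤ 1 / 4 := by nlinarith
  have hq_sq : q ^ 2 ≤ (2 * m) ^ 2 := by
    nlinarith [mul_le_mul_of_nonneg_right hm_sq (sq_nonneg q)]
  exact (abs_le_of_sq_le_sq' hq_sq (by positivity)).1

lemma mul_rpow_neg_le_half {K μ s : ℝ} (hK : 0 ≤ K) (hμ : 1 ≤ μ) (hs : 2 * K + 1 ≤ s) :
    K * s ^ (-μ) ≤ 1 / 2 := by
  have hs0 : 0 < s := by linarith
  calc K * s ^ (-μ) ≤ K * s ^ (-1 : ℝ) := by
        gcongr; linarith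
    _ = K / s := by rw [rpow_neg_one, div_eq_mul_inv]
    _ ≤ 1 / 2 := by rw [div_le_iff₀ hs0]; linarith

lemma neg_two_mul_rpow_le_of_neg_mul_rpow_le_flux {g : ℝ → ℝ} {p μ K s : ℝ} (hs : 0 < s)
    (hK : 0 ≤ K) (hsmall : K * s ^ (-μ) ≤ 1 / 2) (h : -(K * s ^ (p - μ)) ≤ flux p g s) :
    -(2 * K * s ^ (-μ)) ≤ g s := by
  have hsplit : K * s ^ (p - μ) = s ^ p * (K * s ^ (-μ)) := by
    rw [sub_eq_add_neg, rpow_add hs]; ring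
  rw [flux, hsplit, mul_div_assoc, ← mul_neg] at h
  rw [mul_assoc]
  exact neg_two_mul_le_of_neg_le_div_sqrt_s13 (by positivity) hsmall
    (le_of_mul_le_mul_left h (rpow_pos_of_pos hs p))

lemma le_add_div_mul_rpow_of_hasDerivAt {f f' : ℝ → ℝ} {t r C μ : ℝ} (ht : 0 < t) (htr : t ≤ r)
    (hμ : 1 < μ) (hC : 0 ≤ C) (hf : ContinuousOn f (Icc t r))
    (hderiv : ∀ x ∈ Ioo t r, HasDerivAt f (f' x) x)
    (hf' : ∀ x ∈ Ioo t r, -(C * x ^ (-μ)) ≤ f' x) :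
    f t ≤ f r + C / (μ - 1) * t ^ (1 - μ) := by
  set g : ℝ → ℝ := fun x => f x - C / (μ - 1) * x ^ (1 - μ)
  have hcont : ContinuousOn g (Icc t r) :=
    hf.sub fun x hx => ((continuousAt_rpow_const x _ (.inl (ht.trans_le hx.1).ne')).const_mul
      _).continuousWithinAt
  have hg : ∀ x ∈ Ioo t r, HasDerivAt g (f' x + C * x ^ (-μ)) x := fun x hx => by
    have hpow := hasDerivAt_rpow_const (p := 1 - μ) (.inl (ht.trans hx.1).ne')
    refine ((hderiv x hx).sub (hpow.const_mul (C / (μ - 1)))).congr_deriv ?_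
    rw [show 1 - μ - 1 = -μ by ring]
    field_simp [(by linarith : μ - 1 ≠ 0)]
    ring
  have hmono : MonotoneOn g (Icc t r) :=
    monotoneOn_of_hasDerivWithinAt_nonneg (convex_Icc t r) hcont
      (fun x hx => (hg x (by rwa [interior_Icc] at hx)).hasDerivWithinAt)
      (fun x hx => by rw [interior_Icc] at hx; linarith [hf' x hx])
  have hgtr : g t ≤ g r := hmono (left_mem_Icc.2 htr) (right_mem_Icc.2 htr) htr
  have hr : 0 ≤ C / (μ - 1) * r ^ (1 - μ) :=
    mul_nonneg (div_nonneg hC (by linarith)) (rpow_nonneg (ht.le.trans htr) _)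
  simp only [g] at hgtr
  linarith

/-- **Second height bound** (ODE content of Lemma 7.3). For `n ≥ 4`, `τ > 1`, `c ≥ 1` there are
`t₀, c₀ > 0` depending only on `n, τ, c` such that every continuously differentiable radial
profile `f : (0, r] → ℝ` with `f(r) = z`, `f' ≤ 0`, whose flux
`ψ(t) = t^(n-2) f'(t)/√(1+f'(t)²)` satisfies
`ψ'(t) ≥ -c t^(n-2) (1 + (t² + f(t)²)^((τ+1)/2))⁻¹` and `ψ(t) → 0` as `t → 0⁺`, obeys
`z ≤ f(t) ≤ c₀ + z` for every `t ∈ (t₀, r]`. -/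
theorem second_height_bound (n : ℕ) (hn : 4 ≤ n) (τ c : ℝ) (hτ : 1 < τ) (hc : 1 ≤ c) :
    ∃ t₀ > (0 : ℝ), ∃ c₀ > (0 : ℝ), ∀ r : ℝ, t₀ < r → ∀ z : ℝ, ∀ f f' ψ' : ℝ → ℝ,
      (∀ t ∈ Set.Ioo (0 : ℝ) r, HasDerivAt f (f' t) t) →
      ContinuousOn f (Set.Ioc 0 r) →
      ContinuousOn f' (Set.Ioc 0 r) →
      f r = z →
      (∀ t ∈ Set.Ioo (0 : ℝ) r, f' t ≤ 0) →
      (∀ t ∈ Set.Ioo (0 : ℝ) r,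
        HasDerivAt (fun u => u ^ ((n : ℝ) - 2) * f' u / Real.sqrt (1 + f' u ^ 2)) (ψ' t) t) →
      (∀ t ∈ Set.Ioo (0 : ℝ) r,
        -(c * t ^ ((n : ℝ) - 2) * (1 + (t ^ 2 + f t ^ 2) ^ ((τ + 1) / 2))⁻¹) ≤ ψ' t) →
      Filter.Tendsto (fun u => u ^ ((n : ℝ) - 2) * f' u / Real.sqrt (1 + f' u ^ 2))
        (nhdsWithin 0 (Set.Ioi 0)) (nhds 0) →
      ∀ t ∈ Set.Ioc t₀ r, z ≤ f t ∧ f t ≤ c₀ + z := by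
  obtain ⟨μ, hμ1, hμ⟩ := exists_between (lt_min hτ one_lt_two)
  have hn' : (4 : ℝ) ≤ n := by exact_mod_cast hn
  have ha : 0 < (n : ℝ) - 2 - μ := by linarith [min_le_right τ 2]
  set K := c / ((n : ℝ) - 2 - μ)
  have hK : 0 < K := div_pos (by linarith) ha
  refine ⟨2 * K + 1, by positivity, 2 * K / (μ - 1), div_pos (by positivity) (by linarith), ?_⟩
  intro r hr z f f' ψ' hf hfc _ hfr hf'_nonpos hψ hψ'_ge hψ_lim t ht
  have ht0 : 0 < t := by linarith [ht.1]
  have hsub : Icc t r ⊆ Ioc 0 r := fun x hx => ⟨ht0.trans_le hx.1, hx.2⟩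
  have hderiv : ∀ x ∈ Ioo t r, HasDerivAt f (f' x) x := fun x hx => hf x ⟨ht0.trans hx.1, hx.2⟩
  have hslope : ∀ s ∈ Ioo t r, -(2 * K * s ^ (-μ)) ≤ f' s := fun s hs =>
    neg_two_mul_rpow_le_of_neg_mul_rpow_le_flux (ht0.trans hs.1) hK.le
      (mul_rpow_neg_le_half hK.le hμ1.le (by linarith [ht.1, hs.1]))
      (neg_div_mul_rpow_le_flux ha (by linarith) (hμ.le.trans (min_le_left τ 2)) (by linarith)
        hψ hψ'_ge hψ_lim ⟨ht0.trans hs.1, hs.2⟩)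
  constructor
  · have hanti : AntitoneOn f (Icc t r) :=
      antitoneOn_of_hasDerivWithinAt_nonpos (convex_Icc t r) (hfc.mono hsub)
        (fun x hx => (hderiv x (by rwa [interior_Icc] at hx)).hasDerivWithinAt)
        (fun x hx => by rw [interior_Icc] at hx; exact hf'_nonpos x ⟨ht0.trans hx.1, hx.2⟩)
    rw [← hfr]
    exact hanti (left_mem_Icc.2 ht.2) (right_mem_Icc.2 ht.2) ht.2
  · have hheight := le_add_div_mul_rpow_of_hasDerivAt ht0 ht.2 hμ1 (by positivity) (hfc.mono hsub)
      hderiv hslope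
    have ht_pow : t ^ (1 - μ) ≤ 1 :=
      rpow_le_one_of_one_le_of_nonpos (by linarith [ht.1]) (by linarith)
    have hcoef : 0 ≤ 2 * K / (μ - 1) := div_nonneg (by positivity) (by linarith)
    linarith [mul_le_mul_of_nonneg_left ht_pow hcoef]
end
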